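/- arXiv:2505.07277 — 15 statements merged into one kernel-verified Lean document; each statement's English description precedes it below -/
import Mathlib

section
/- Let f : ℕ → ℂ be a nonzero multiplicative function. Then f is Toeplitz if and only if there exist a modulus m ≥ 1, a Dirichlet character χ of modulus m, and a finite set F of prime numbers such that f(n) = χ(n) for every n ≥ 1 that is divisible by no prime of F. -/
open scoped BigOperators Classical

noncomputable section

/-- `f : ℕ → ℂ` is multiplicative: `f 1 = 1` and `f (a*b) = f a * f b` for coprime `a, b`. -/
def IsMult (f : ℕ → ℂ) : Prop :=
  f 1 = 1 ∧ ∀ a b : ℕ, Nat.Coprime a b → f (a * b) = f a * f b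

/-- `Per_m(f)`: the set of positions `n ≥ 1` such that `f` is constant on
`{n' ≥ 1 : n' ≡ n (mod m)}`. -/
def PerSet (f : ℕ → ℂ) (m : ℕ) : Set ℕ :=
  {n : ℕ | 1 ≤ n ∧ ∀ n' : ℕ, 1 ≤ n' → n' % m = n % m → f n' = f n}

/-- `f` is Toeplitz: every position `n ≥ 1` has a period. -/
def IsToeplitz (f : ℕ → ℂ) : Prop :=
  ∀ n : ℕ, 1 ≤ n → ∃ m : ℕ, 1 ≤ m ∧ n ∈ PerSet f m

/-- `χ : ℕ → ℂ` is (the function on `ℕ` induced by) a Dirichlet character of modulus `m`. -/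
def IsDirichletCharFn (m : ℕ) (χ : ℕ → ℂ) : Prop :=
  ∃ χ₀ : DirichletCharacter ℂ m, ∀ n : ℕ, χ n = χ₀ (n : ZMod m)

/-- `χ : ℕ → ℂ` is induced by a primitive Dirichlet character of modulus `m`. -/
def IsPrimitiveDirichletCharFn (m : ℕ) (χ : ℕ → ℂ) : Prop :=
  ∃ χ₀ : DirichletCharacter ℂ m, χ₀.IsPrimitive ∧ ∀ n : ℕ, χ n = χ₀ (n : ZMod m)

/-- `𝔻(f,g) < ∞`: convergence of the Granville–Soundararajan distance series. -/
def PretConv (f g : ℕ → ℂ) : Prop :=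
  Summable (fun p : Nat.Primes =>
    (1 : ℝ) / ((p : ℕ) : ℝ) * (1 - (f (p : ℕ) * (starRingEnd ℂ) (g (p : ℕ))).re))

/-- `f` is Besicovitch rationally almost periodic. -/
def IsRAP (f : ℕ → ℂ) : Prop :=
  ∀ ε : ℝ, 0 < ε → ∃ (g : ℕ → ℂ) (m : ℕ), 1 ≤ m ∧ (∀ n : ℕ, g (n + m) = g n) ∧
    Filter.limsup
      (fun N : ℕ => (1 : ℝ) / N * ∑ n ∈ Finset.Icc 1 N, ‖f n - g n‖)
      Filter.atTop < ε

/-! If `1 ∈ Per_m(f)` then `f = 1` on `n ≡ 1 (mod m)`. Pairing `a` coprime to `m` with some `c`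
coprime to a given number and with `a c ≡ 1 (mod m)` (Chinese remainder theorem) shows that on
the integers coprime to `m`, `f` does not vanish, is constant on residue classes and is
multiplicative modulo `m`: it is a Dirichlet character there, and `F` = the primes of `m`.

Conversely, write `n = a b` with `a` the `F`-part of `n`. Every `n' ≡ n (mod a m ∏ F)` has the
form `a b'` with `b' ≡ b (mod m ∏ F)`, so `b'` again avoids `F` and
`f n' = f a χ b' = f a χ b = f n`. -/

namespace Nat

theorem ModEq.coprime_iff {a b m : ℕ} (h : a ≡ b [MOD m]) : a.Coprime m ↔ b.Coprime m := by
  rw [Coprime, Coprime, h.gcd_eq]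

theorem exists_pos_coprime_modEq {N m : ℕ} (hN : 0 < N) (hm : 0 < m) (hNm : N.Coprime m)
    (r : ℕ) : ∃ c, 0 < c ∧ c.Coprime N ∧ c ≡ r [MOD m] := by
  obtain ⟨c, hcN, hcm⟩ := chineseRemainder hNm 1 r
  refine ⟨c + N * m, by positivity, coprime_of_mul_modEq_one 1 ?_, ?_⟩
  · simpa [ModEq, add_mul_mod_self_left] using hcN
  · simpa [ModEq, add_mul_mod_self_right] using hcm

theorem exists_pos_coprime_mul_modEq_one {N m a : ℕ} (hN : 0 < N) (hm : 0 < m)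
    (hNm : N.Coprime m) (ha : a.Coprime m) : ∃ c, 0 < c ∧ c.Coprime N ∧ a * c ≡ 1 [MOD m] := by
  obtain ⟨c, hc, hcN, hcm⟩ := exists_pos_coprime_modEq hN hm hNm (a ^ (φ m - 1))
  refine ⟨c, hc, hcN, ?_⟩
  calc a * c ≡ a * a ^ (φ m - 1) [MOD m] := hcm.mul_left a
    _ = a ^ φ m := mul_pow_sub_one (totient_pos.mpr hm).ne' a
    _ ≡ 1 [MOD m] := ModEq.pow_totient ha

theorem exists_mul_eq_forall_prime_dvd_mem_and_forall_not_dvd {F : Finset ℕ}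
    (hF : ∀ p ∈ F, p.Prime) {n : ℕ} (hn : n ≠ 0) :
    ∃ a b, a * b = n ∧ (∀ q, q.Prime → q ∣ a → q ∈ F) ∧ ∀ p ∈ F, ¬ p ∣ b := by
  induction F using Finset.induction_on with
  | empty => exact ⟨1, n, one_mul n, fun q hq h => absurd (eq_one_of_dvd_one h) hq.ne_one,
      by simp⟩
  | insert p F hpF ih =>
    have hp : p.Prime := hF p (Finset.mem_insert_self p F)
    obtain ⟨a, b, rfl, ha, hb⟩ := ih fun q hq => hF q (Finset.mem_insert_of_mem hq)
    have hb0 : b ≠ 0 := right_ne_zero_of_mul hn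
    refine ⟨a * ordProj[p] b, ordCompl[p] b, ?_, ?_, ?_⟩
    · rw [mul_assoc, ordProj_mul_ordCompl_eq_self]
    · intro q hq hqa
      rcases hq.dvd_mul.mp hqa with hqa | hqp
      · exact Finset.mem_insert_of_mem (ha q hq hqa)
      · rw [(prime_dvd_prime_iff_eq hq hp).mp (hq.dvd_of_dvd_pow hqp)]
        exact Finset.mem_insert_self p F
    · intro q hq
      rcases Finset.mem_insert.mp hq with rfl | hqF
      · exact not_dvd_ordCompl hp hb0
      · exact fun hqb => hb q hqF (hqb.trans (ordCompl_dvd b p))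

end Nat

theorem Function.Periodic.apply_eq_of_modEq {α : Type*} {g : ℕ → α} {m : ℕ}
    (hg : Function.Periodic g m) {a b : ℕ} (h : a ≡ b [MOD m]) : g a = g b := by
  rw [← hg.map_mod_nat a, h, hg.map_mod_nat]

namespace IsMult

variable {f : ℕ → ℂ} {m : ℕ}

theorem apply_eq_one_of_modEq_one (hf : IsMult f) (h1 : 1 ∈ PerSet f m) {k : ℕ} (hk : 0 < k)
    (hk1 : k ≡ 1 [MOD m]) : f k = 1 :=
  (h1.2 k hk hk1).trans hf.1

theorem apply_mul_apply_eq_one (hf : IsMult f) (h1 : 1 ∈ PerSet f m) {a c : ℕ} (ha : 0 < a)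
    (hc : 0 < c) (hac : a.Coprime c) (h : a * c ≡ 1 [MOD m]) : f a * f c = 1 := by
  rw [← hf.2 a c hac]
  exact hf.apply_eq_one_of_modEq_one h1 (Nat.mul_pos ha hc) h

theorem apply_ne_zero (hf : IsMult f) (hm : 0 < m) (h1 : 1 ∈ PerSet f m) {a : ℕ} (ha : 0 < a)
    (ham : a.Coprime m) : f a ≠ 0 := by
  obtain ⟨c, hc, hca, hac⟩ := Nat.exists_pos_coprime_mul_modEq_one ha hm ham ham
  exact left_ne_zero_of_mul_eq_one (hf.apply_mul_apply_eq_one h1 ha hc hca.symm hac)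

theorem apply_eq_of_modEq (hf : IsMult f) (hm : 0 < m) (h1 : 1 ∈ PerSet f m) {a b : ℕ} (ha : 0 < a)
    (hb : 0 < b) (ham : a.Coprime m) (hab : a ≡ b [MOD m]) : f a = f b := by
  obtain ⟨c, hc, hcab, hac⟩ := Nat.exists_pos_coprime_mul_modEq_one (Nat.mul_pos ha hb) hm
    (ham.mul_left (hab.coprime_iff.mp ham)) ham
  obtain ⟨hca, hcb⟩ := Nat.coprime_mul_iff_right.mp hcab
  have hfa := hf.apply_mul_apply_eq_one h1 ha hc hca.symm hac
  have hfb := hf.apply_mul_apply_eq_one h1 hb hc hcb.symm ((hab.mul_right c).symm.trans hac)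
  exact mul_right_cancel₀ (right_ne_zero_of_mul_eq_one hfa) (hfa.trans hfb.symm)

theorem apply_eq_mul_of_modEq_mul (hf : IsMult f) (hm : 0 < m) (h1 : 1 ∈ PerSet f m) {a b n : ℕ}
    (ha : 0 < a) (hb : 0 < b) (hn : 0 < n) (ham : a.Coprime m) (hbm : b.Coprime m)
    (h : n ≡ a * b [MOD m]) : f n = f a * f b := by
  obtain ⟨b', hb', hb'a, hb'b⟩ := Nat.exists_pos_coprime_modEq ha hm ham b
  have hab' : n ≡ a * b' [MOD m] := h.trans (hb'b.mul_left a).symm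
  calc f n = f (a * b') := hf.apply_eq_of_modEq hm h1 hn (Nat.mul_pos ha hb')
        (h.coprime_iff.mpr (ham.mul_left hbm)) hab'
    _ = f a * f b' := hf.2 a b' hb'a.symm
    _ = f a * f b := by rw [hf.apply_eq_of_modEq hm h1 hb' hb (hb'b.coprime_iff.mpr hbm) hb'b]

theorem exists_dirichletCharacter_of_one_mem_perSet (hf : IsMult f) (hm : 0 < m)
    (h1 : 1 ∈ PerSet f m) :
    ∃ χ : DirichletCharacter ℂ m, ∀ n, 0 < n → n.Coprime m → f n = χ n := by
  have : NeZero m := ⟨hm.ne'⟩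
  -- a positive representative of each unit; `val` alone gives `0` when `m = 1`
  let rep (u : (ZMod m)ˣ) : ℕ := (u : ZMod m).val + m
  have rep_pos (u) : 0 < rep u := Nat.add_pos_right _ hm
  have rep_coprime (u) : (rep u).Coprime m :=
    Nat.coprime_add_self_left.mpr (ZMod.val_coe_unit_coprime u)
  have rep_cast (u) : (rep u : ZMod m) = u := by simp [rep]
  have rep_modEq (u : (ZMod m)ˣ) (n : ℕ) (h : (n : ZMod m) = u) : rep u ≡ n [MOD m] := by
    rw [← ZMod.natCast_eq_natCast_iff, rep_cast, h]
  let ψ : (ZMod m)ˣ →* ℂˣ := MonoidHom.mk'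
    (fun u => Units.mk0 (f (rep u)) (hf.apply_ne_zero hm h1 (rep_pos u) (rep_coprime u)))
    fun u v => Units.ext <| hf.apply_eq_mul_of_modEq_mul hm h1 (rep_pos u) (rep_pos v)
      (rep_pos _) (rep_coprime u) (rep_coprime v) (rep_modEq _ _ (by push_cast [rep_cast]; rfl))
  refine ⟨MulChar.ofUnitHom ψ, fun n hn hnm => ?_⟩
  rw [← ZMod.coe_unitOfCoprime n hnm, MulChar.ofUnitHom_coe]
  exact (hf.apply_eq_of_modEq hm h1 (rep_pos _) hn (rep_coprime _)
    (rep_modEq _ _ (ZMod.coe_unitOfCoprime n hnm).symm)).symm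

theorem isToeplitz_of_eq_periodic_off_primes (hf : IsMult f) {g : ℕ → ℂ}
    (hg : Function.Periodic g m) (hm : 0 < m) {F : Finset ℕ} (hF : ∀ p ∈ F, p.Prime)
    (hfg : ∀ n, 1 ≤ n → (∀ p ∈ F, ¬ p ∣ n) → f n = g n) : IsToeplitz f := by
  intro n hn
  obtain ⟨a, b, rfl, ha, hb⟩ :=
    Nat.exists_mul_eq_forall_prime_dvd_mem_and_forall_not_dvd hF (Nat.one_le_iff_ne_zero.mp hn)
  have hab : a * b ≠ 0 := Nat.one_le_iff_ne_zero.mp hn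
  have apply_mul (x : ℕ) (hx : x ≠ 0) (hxF : ∀ p ∈ F, ¬ p ∣ x) : f (a * x) = f a * g x := by
    rw [hf.2 a x (Nat.coprime_of_dvd fun q hq hqa => hxF q (ha q hq hqa)),
      hfg x (Nat.one_le_iff_ne_zero.mpr hx) hxF]
  have hP : 0 < ∏ p ∈ F, p := Finset.prod_pos fun p hp => (hF p hp).pos
  refine ⟨a * (m * ∏ p ∈ F, p), Nat.mul_pos (Nat.pos_of_ne_zero (left_ne_zero_of_mul hab))
    (Nat.mul_pos hm hP), hn, fun n' hn' h => ?_⟩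
  replace h : n' ≡ a * b [MOD a * (m * ∏ p ∈ F, p)] := h
  obtain ⟨b', rfl⟩ : a ∣ n' := (h.dvd_iff (dvd_mul_right _ _)).mpr (dvd_mul_right a b)
  have hb' : b' ≡ b [MOD m * ∏ p ∈ F, p] := Nat.ModEq.mul_left_cancel' (left_ne_zero_of_mul hab) h
  have hb'F (p : ℕ) (hp : p ∈ F) : ¬ p ∣ b' :=
    (hb'.dvd_iff (dvd_mul_of_dvd_right (Finset.dvd_prod_of_mem _ hp) m)).not.mpr (hb p hp)
  rw [apply_mul b' (right_ne_zero_of_mul (Nat.one_le_iff_ne_zero.mp hn')) hb'F,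
    apply_mul b (right_ne_zero_of_mul hab) hb,
    hg.apply_eq_of_modEq (hb'.of_mul_right _)]

end IsMult

theorem toeplitz_iff_eq_dirichlet_char_off_finite_primes_general
    (f : ℕ → ℂ) (hf : IsMult f) :
    IsToeplitz f ↔
      ∃ (m : ℕ) (χ : ℕ → ℂ) (F : Finset ℕ),
        1 ≤ m ∧ IsDirichletCharFn m χ ∧ (∀ p ∈ F, Nat.Prime p) ∧
        ∀ n : ℕ, 1 ≤ n → (∀ p ∈ F, ¬ p ∣ n) → f n = χ n := by
  constructor
  · intro htoe
    obtain ⟨m, hm, h1⟩ := htoe 1 le_rfl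
    obtain ⟨χ, hχ⟩ := hf.exists_dirichletCharacter_of_one_mem_perSet hm h1
    refine ⟨m, fun n => χ n, m.primeFactors, hm, ⟨χ, fun _ => rfl⟩,
      fun p hp => Nat.prime_of_mem_primeFactors hp, fun n hn hnF => hχ n hn ?_⟩
    exact Nat.coprime_of_dvd fun p hp hpn hpm =>
      hnF p (Nat.mem_primeFactors.mpr ⟨hp, hpm, by omega⟩) hpn
  · rintro ⟨m, χ, F, hm, ⟨χ₀, hχ⟩, hF, hfχ⟩
    refine hf.isToeplitz_of_eq_periodic_off_primes (g := χ) (fun n => ?_) hm hF hfχ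
    simp [hχ]

theorem toeplitz_iff_eq_dirichlet_char_off_finite_primes
    (f : ℕ → ℂ) (hf : IsMult f) (hnz : ∃ n : ℕ, f n ≠ 0) :
    IsToeplitz f ↔
      ∃ (m : ℕ) (χ : ℕ → ℂ) (F : Finset ℕ),
        1 ≤ m ∧ IsDirichletCharFn m χ ∧ (∀ p ∈ F, Nat.Prime p) ∧
        ∀ n : ℕ, 1 ≤ n → (∀ p ∈ F, ¬ p ∣ n) → f n = χ n :=
  toeplitz_iff_eq_dirichlet_char_off_finite_primes_general f hf
end
end

section
/- Let f : ℕ → ℂ be a nonzero multiplicative Toeplitz function. Then for every ε > 0 there exists T ≥ 1 such that the upper natural density of the set {n ≥ 1 : n ∉ Per_T(f)} is smaller than ε, i.e. limsup_{N→∞} (1/N)·|{n ≤ N : n ∉ Per_T(f)}| < ε. (In particular every multiplicative Toeplitz sequence is a regular Toeplitz sequence.) -/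
open scoped BigOperators Classical

noncomputable section

/-!
Since `1` is a Toeplitz position, there is `m ≥ 1` with `f ≡ 1` on the class `1 mod m`.
Multiplying by a suitable `k` coprime to everything in sight then shows that `f` is
`m`-periodic on integers coprime to `m`. Writing `n = g u` with `g = gcd(n, m^E)`, the
position `n` is `m^E`-periodic as soon as `g m ∣ m^E`, which holds unless `p^E ∣ n` for some
prime `p ∣ m`. Those exceptions have upper density at most `ω(m) / 2^E`, which is small for
large `E`.
-/

open Finset

lemma Nat.exists_pos_mul_modEq_one_and_coprime {n m N : ℕ} (hm : 0 < m) (hN : 0 < N)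
    (hn : n.Coprime m) (hmN : m.Coprime N) :
    ∃ k, 0 < k ∧ n * k ≡ 1 [MOD m] ∧ k.Coprime N := by
  obtain ⟨k, hkm, hkN⟩ := Nat.chineseRemainder hmN (n ^ (m.totient - 1)) 1
  refine ⟨k + m * N, by positivity, ?_, ?_⟩
  · calc n * (k + m * N) ≡ n * n ^ (m.totient - 1) [MOD m] :=
          Nat.ModEq.mul_left n ((Nat.add_mul_mod_self_left k m N).trans hkm)
      _ = n ^ m.totient := by
          rw [← pow_succ', Nat.succ_eq_add_one, Nat.sub_add_cancel (Nat.totient_pos.2 hm)]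
      _ ≡ 1 [MOD m] := Nat.ModEq.pow_totient hn
  · have hk1 : k + m * N ≡ 1 [MOD N] := (Nat.add_mul_mod_self_right k m N).trans hkN
    rw [Nat.Coprime, hk1.gcd_eq, Nat.gcd_one_left]

lemma Nat.gcd_pow_mul_dvd_pow {m n E : ℕ} (hm : m ≠ 0) (hn : n ≠ 0)
    (h : ∀ p ∈ m.primeFactors, ¬ p ^ E ∣ n) : n.gcd (m ^ E) * m ∣ m ^ E := by
  have hmE : m ^ E ≠ 0 := pow_ne_zero E hm
  rw [← Nat.factorization_le_iff_dvd (mul_ne_zero (Nat.gcd_ne_zero_right hmE) hm) hmE]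
  intro p
  rw [Nat.factorization_mul (Nat.gcd_ne_zero_right hmE) hm, Nat.factorization_gcd hn hmE,
    Nat.factorization_pow]
  simp only [Finsupp.add_apply, Finsupp.inf_apply, Finsupp.smul_apply, smul_eq_mul]
  by_cases hp : p ∈ m.primeFactors
  · have hnp : n.factorization p < E := by
      by_contra hle
      exact h p hp (((Nat.prime_of_mem_primeFactors hp).pow_dvd_iff_le_factorization hn).2
        (not_lt.1 hle))
    have hmp : 1 ≤ m.factorization p := by
      rwa [Nat.one_le_iff_ne_zero, ← Finsupp.mem_support_iff, Nat.support_factorization]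
    nlinarith [inf_le_left (a := n.factorization p) (b := E * m.factorization p)]
  · rw [← Nat.support_factorization, Finsupp.notMem_support_iff] at hp
    simp [hp]

lemma one_div_mul_card_biUnion_pow_dvd_le (m E N : ℕ) :
    (1 : ℝ) / N * #(m.primeFactors.biUnion fun p => {n ∈ Icc 1 N | p ^ E ∣ n}) ≤
      #m.primeFactors / 2 ^ E :=
  calc (1 : ℝ) / N * #(m.primeFactors.biUnion fun p => {n ∈ Icc 1 N | p ^ E ∣ n})
      ≤ 1 / N * ∑ p ∈ m.primeFactors, (#{n ∈ Icc 1 N | p ^ E ∣ n} : ℝ) := by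
        gcongr
        exact_mod_cast card_biUnion_le
    _ ≤ 1 / N * ∑ _p ∈ m.primeFactors, (N / 2 ^ E : ℝ) := by
        gcongr with p hp
        rw [show Icc 1 N = Ioc 0 N from rfl, Nat.Ioc_filter_dvd_card_eq_div]
        refine Nat.cast_div_le.trans ?_
        rw [Nat.cast_pow]
        gcongr
        exact_mod_cast (Nat.prime_of_mem_primeFactors hp).two_le
    _ = #m.primeFactors / 2 ^ E * (N / N) := by
        rw [sum_const, nsmul_eq_mul]
        ring
    _ ≤ #m.primeFactors / 2 ^ E := mul_le_of_le_one_right (by positivity) (div_self_le_one _)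

namespace IsMult

variable {f : ℕ → ℂ} {m : ℕ}

lemma eq_of_modEq_of_coprime (hf : IsMult f) (h1 : ∀ n, 0 < n → n ≡ 1 [MOD m] → f n = 1)
    {n n' : ℕ} (hn : 0 < n) (hn' : 0 < n') (hc : n.Coprime m) (hmod : n' ≡ n [MOD m]) :
    f n' = f n := by
  rcases m.eq_zero_or_pos with rfl | hm
  · rw [Nat.modEq_zero_iff.1 hmod]
  have hc' : n'.Coprime m := by rwa [Nat.Coprime, hmod.gcd_eq]
  obtain ⟨k, hk, hnk, hkc⟩ := Nat.exists_pos_mul_modEq_one_and_coprime hm (Nat.mul_pos hn hn')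
    hc (Nat.Coprime.mul_right hc.symm hc'.symm)
  have hfnk : f n * f k = 1 := by
    rw [← hf.2 _ _ (hkc.coprime_dvd_right (dvd_mul_right n n')).symm]
    exact h1 _ (by positivity) hnk
  have hfn'k : f n' * f k = 1 := by
    rw [← hf.2 _ _ (hkc.coprime_dvd_right (dvd_mul_left n' n)).symm]
    exact h1 _ (by positivity) ((hmod.mul_right k).trans hnk)
  exact mul_right_cancel₀ (right_ne_zero_of_mul_eq_one hfnk) (hfn'k.trans hfnk.symm)

lemma mem_perSet_pow_of_gcd_mul_dvd (hf : IsMult f)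
    (h1 : ∀ n, 0 < n → n ≡ 1 [MOD m] → f n = 1) {E n : ℕ} (hn : 0 < n)
    (hdvd : n.gcd (m ^ E) * m ∣ m ^ E) : n ∈ PerSet f (m ^ E) := by
  set g := n.gcd (m ^ E)
  have hg : 0 < g := Nat.gcd_pos_of_pos_left _ hn
  obtain ⟨u, hu⟩ : g ∣ n := Nat.gcd_dvd_left n (m ^ E)
  have hum : u.Coprime m := by
    have : (n / g).Coprime (m ^ E / g) := Nat.coprime_div_gcd_div_gcd hg
    rw [hu, Nat.mul_div_cancel_left u hg] at this
    exact this.coprime_dvd_right (Nat.dvd_div_of_mul_dvd hdvd)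
  refine ⟨hn, fun n' hn' hmod => ?_⟩
  obtain ⟨u', hu'⟩ : g ∣ n' := (Nat.ModEq.dvd_iff hmod (Nat.gcd_dvd_right n _)).2
    (Nat.gcd_dvd_left n _)
  have hmod' : u' ≡ u [MOD m] := by
    refine Nat.ModEq.mul_left_cancel' hg.ne' ?_
    rw [← hu, ← hu']
    exact Nat.ModEq.of_dvd hdvd hmod
  have hu'm : u'.Coprime m := by rwa [Nat.Coprime, hmod'.gcd_eq]
  have hgu : ∀ {v}, v.Coprime m → g.Coprime v := fun hv =>
    ((hv.pow_right E).coprime_dvd_right (Nat.gcd_dvd_right n _)).symm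
  rw [hu, hu', hf.2 _ _ (hgu hum), hf.2 _ _ (hgu hu'm),
    hf.eq_of_modEq_of_coprime h1 (Nat.pos_of_mul_pos_left (hu ▸ hn))
      (Nat.pos_of_mul_pos_left (hu' ▸ hn')) hum hmod']

lemma filter_notMem_perSet_pow_subset (hf : IsMult f)
    (h1 : ∀ n, 0 < n → n ≡ 1 [MOD m] → f n = 1) (hm : m ≠ 0) (E N : ℕ) :
    {n ∈ Icc 1 N | n ∉ PerSet f (m ^ E)} ⊆
      m.primeFactors.biUnion fun p => {n ∈ Icc 1 N | p ^ E ∣ n} := by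
  intro n hn
  simp only [mem_filter, mem_Icc, mem_biUnion] at hn ⊢
  by_contra! h
  exact hn.2 (hf.mem_perSet_pow_of_gcd_mul_dvd h1 hn.1.1
    (Nat.gcd_pow_mul_dvd_pow hm (by omega) fun p hp => h p hp hn.1))

end IsMult

theorem multiplicative_toeplitz_is_regular_general
    (f : ℕ → ℂ) (hf : IsMult f) (htoe : IsToeplitz f) :
    ∀ ε : ℝ, 0 < ε → ∃ T : ℕ, 1 ≤ T ∧
      Filter.limsup
        (fun N : ℕ => (1 : ℝ) / N *
          (((Finset.Icc 1 N).filter (fun n => n ∉ PerSet f T)).card : ℝ))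
        Filter.atTop < ε := by
  intro ε hε
  obtain ⟨m, hm, -, hper⟩ := htoe 1 le_rfl
  have h1 : ∀ n, 0 < n → n ≡ 1 [MOD m] → f n = 1 := fun n hn hmod =>
    (hper n hn hmod).trans hf.1
  obtain ⟨E, hE⟩ := pow_unbounded_of_one_lt ((#m.primeFactors : ℝ) / ε) one_lt_two
  refine ⟨m ^ E, Nat.one_le_pow _ _ hm, ?_⟩
  have hbound (N : ℕ) :
      (1 : ℝ) / N * #{n ∈ Icc 1 N | n ∉ PerSet f (m ^ E)} ≤ #m.primeFactors / 2 ^ E := by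
    refine le_trans ?_ (one_div_mul_card_biUnion_pow_dvd_le m E N)
    gcongr
    exact hf.filter_notMem_perSet_pow_subset h1 (by omega) E N
  calc _ ≤ (#m.primeFactors / 2 ^ E : ℝ) := Filter.limsup_le_of_le
        (Filter.isCoboundedUnder_le_of_le _ fun N => by positivity) (.of_forall hbound)
    _ < ε := by rwa [div_lt_iff₀ (by positivity), mul_comm, ← div_lt_iff₀ hε]

theorem multiplicative_toeplitz_is_regular
    (f : ℕ → ℂ) (hf : IsMult f) (hnz : ∃ n : ℕ, f n ≠ 0) (htoe : IsToeplitz f) :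
    ∀ ε : ℝ, 0 < ε → ∃ T : ℕ, 1 ≤ T ∧
      Filter.limsup
        (fun N : ℕ => (1 : ℝ) / N *
          (((Finset.Icc 1 N).filter (fun n => n ∉ PerSet f T)).card : ℝ))
        Filter.atTop < ε :=
  multiplicative_toeplitz_is_regular_general f hf htoe

end
end

section
/- Let f : ℕ → ℂ be a nonzero multiplicative Toeplitz function and let m ≥ 1 be such that 1 ∈ Per_m(f). Then there exists a unique Dirichlet character χ of modulus m such that f(n) = χ(n) for every n ≥ 1 with gcd(n, m) = 1. -/
open scoped BigOperators Classical

noncomputable section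

/-!
The period condition `1 ∈ Per_m(f)` says `f n = 1` for every `n ≥ 1` with `n ≡ 1 (mod m)`. If
`a ≡ b (mod m)` are coprime to `m`, pick `c ≥ 1` coprime to `ab` with `ac ≡ 1 (mod m)`; then
`f a f c = f (ac) = 1 = f (bc) = f b f c`, so on residues coprime to `m` the function `f` is a
nonvanishing function of the class. Representing two classes by coprime integers (Chinese remainder
theorem) shows that this function is multiplicative on `(ℤ/mℤ)ˣ`, i.e. a Dirichlet character.
A Dirichlet character is determined by its values on units, which gives uniqueness.
-/

lemma exists_pos_coprime_natCast_eq {m t : ℕ} [NeZero m] (ht : 0 < t) (htm : t.Coprime m)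
    (x : ZMod m) : ∃ b : ℕ, 0 < b ∧ b.Coprime t ∧ (b : ZMod m) = x := by
  obtain ⟨k, hkm, hkt⟩ := Nat.chineseRemainder htm.symm x.val 1
  refine ⟨k + m * t, by have := NeZero.pos m; positivity, ?_, ?_⟩
  · have hb : ((k + m * t : ℕ) : ZMod t) = 1 := by
      simpa using (ZMod.natCast_eq_natCast_iff _ _ _).2 hkt
    rw [← ZMod.isUnit_iff_coprime, hb]
    exact isUnit_one
  · simpa using (ZMod.natCast_eq_natCast_iff _ _ _).2 hkm

lemma exists_pos_coprime_natCast_eq_inv {m t a : ℕ} [NeZero m] (ht : 0 < t)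
    (htm : t.Coprime m) (ha : a.Coprime m) :
    ∃ c : ℕ, 0 < c ∧ c.Coprime t ∧ (a * c : ZMod m) = 1 := by
  obtain ⟨c, hc, hct, hcx⟩ := exists_pos_coprime_natCast_eq ht htm (a : ZMod m)⁻¹
  exact ⟨c, hc, hct, hcx ▸ ZMod.coe_mul_inv_eq_one a ha⟩

lemma exists_pos_coprime_natCast_eq_unit {m : ℕ} [NeZero m] (u : (ZMod m)ˣ) :
    ∃ n : ℕ, 0 < n ∧ n.Coprime m ∧ (n : ZMod m) = u := by
  obtain ⟨n, hn, -, hnu⟩ :=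
    exists_pos_coprime_natCast_eq one_pos (Nat.coprime_one_left m) (u : ZMod m)
  exact ⟨n, hn, by rw [← ZMod.isUnit_iff_coprime, hnu]; exact u.isUnit, hnu⟩

lemma DirichletCharacter.eq_of_forall_pos_coprime {R : Type*} [CommMonoidWithZero R] {m : ℕ}
    [NeZero m] {χ ψ : DirichletCharacter R m}
    (h : ∀ n : ℕ, 0 < n → n.Coprime m → χ n = ψ n) : χ = ψ := by
  refine MulChar.ext fun u => ?_
  obtain ⟨n, hn, hnm, hnu⟩ := exists_pos_coprime_natCast_eq_unit u
  rw [← hnu]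
  exact h n hn hnm

section PerSet

variable {f : ℕ → ℂ} {m : ℕ}

lemma apply_eq_one_of_natCast_eq_one (hf1 : f 1 = 1) (h1 : 1 ∈ PerSet f m) {n : ℕ}
    (hn : 0 < n) (hn1 : (n : ZMod m) = 1) : f n = 1 := by
  have hmod : n % m = 1 % m := (ZMod.natCast_eq_natCast_iff' n 1 m).1 (by rwa [Nat.cast_one])
  rw [h1.2 n hn hmod, hf1]

lemma apply_mul_apply_eq_one (hf : IsMult f) (h1 : 1 ∈ PerSet f m) {a c : ℕ} (ha : 0 < a)
    (hc : 0 < c) (hac : a.Coprime c) (h : (a * c : ZMod m) = 1) : f a * f c = 1 := by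
  rw [← hf.2 a c hac]
  exact apply_eq_one_of_natCast_eq_one hf.1 h1 (Nat.mul_pos ha hc) (by push_cast; exact h)

variable [NeZero m]

lemma apply_ne_zero_of_coprime (hf : IsMult f) (h1 : 1 ∈ PerSet f m) {a : ℕ} (ha : 0 < a)
    (ham : a.Coprime m) : f a ≠ 0 := by
  obtain ⟨c, hc, hca, hac⟩ := exists_pos_coprime_natCast_eq_inv ha ham ham
  exact left_ne_zero_of_mul_eq_one (apply_mul_apply_eq_one hf h1 ha hc hca.symm hac)

lemma apply_eq_of_natCast_eq (hf : IsMult f) (h1 : 1 ∈ PerSet f m) {a b : ℕ} (ha : 0 < a)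
    (hb : 0 < b) (ham : a.Coprime m) (hbm : b.Coprime m) (hab : (a : ZMod m) = b) :
    f a = f b := by
  obtain ⟨c, hc, hcab, hac⟩ :=
    exists_pos_coprime_natCast_eq_inv (Nat.mul_pos ha hb) (ham.mul_left hbm) ham
  have hfa : f a * f c = 1 :=
    apply_mul_apply_eq_one hf h1 ha hc (hcab.coprime_dvd_right (dvd_mul_right a b)).symm hac
  have hfb : f b * f c = 1 :=
    apply_mul_apply_eq_one hf h1 hb hc (hcab.coprime_dvd_right (dvd_mul_left b a)).symm
      (by rwa [← hab])
  exact mul_right_cancel₀ (right_ne_zero_of_mul_eq_one hfa) (hfa.trans hfb.symm)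

lemma exists_dirichletCharacter_eq_of_one_mem_perSet (hf : IsMult f) (h1 : 1 ∈ PerSet f m) :
    ∃ χ : DirichletCharacter ℂ m, ∀ n : ℕ, 0 < n → n.Coprime m → f n = χ n := by
  choose rep hpos hcop hcast using exists_pos_coprime_natCast_eq_unit (m := m)
  have rep_mul (u v : (ZMod m)ˣ) : f (rep (u * v)) = f (rep u) * f (rep v) := by
    obtain ⟨b, hb, hbu, hbv⟩ := exists_pos_coprime_natCast_eq (hpos u) (hcop u) v
    have hbm : b.Coprime m := by rw [← ZMod.isUnit_iff_coprime, hbv]; exact v.isUnit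
    calc f (rep (u * v)) = f (rep u * b) :=
          apply_eq_of_natCast_eq hf h1 (hpos _) (Nat.mul_pos (hpos u) hb) (hcop _)
            ((hcop u).mul_left hbm) (by push_cast; rw [hcast, hcast, hbv, Units.val_mul])
      _ = f (rep u) * f b := hf.2 _ _ hbu.symm
      _ = f (rep u) * f (rep v) := by
          rw [apply_eq_of_natCast_eq hf h1 hb (hpos v) hbm (hcop v) (by rw [hbv, hcast])]
  let φ : (ZMod m)ˣ →* ℂˣ :=
    { toFun u := Units.mk0 (f (rep u)) (apply_ne_zero_of_coprime hf h1 (hpos u) (hcop u))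
      map_one' := Units.ext <|
        apply_eq_one_of_natCast_eq_one hf.1 h1 (hpos 1) (by rw [hcast, Units.val_one])
      map_mul' u v := Units.ext (rep_mul u v) }
  refine ⟨MulChar.ofUnitHom φ, fun n hn hnm => ?_⟩
  rw [← ZMod.coe_unitOfCoprime n hnm, MulChar.ofUnitHom_coe]
  exact apply_eq_of_natCast_eq hf h1 hn (hpos _) hnm (hcop _)
    (by rw [hcast, ZMod.coe_unitOfCoprime])

end PerSet

theorem exists_unique_dirichlet_char_of_toeplitz_general
    (f : ℕ → ℂ) (hf : IsMult f)
    (m : ℕ) (hm : 1 ≤ m) (h1 : 1 ∈ PerSet f m) :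
    ∃! χ : ℕ → ℂ, IsDirichletCharFn m χ ∧
      ∀ n : ℕ, 1 ≤ n → Nat.Coprime n m → f n = χ n := by
  have : NeZero m := ⟨by omega⟩
  obtain ⟨χ, hfχ⟩ := exists_dirichletCharacter_eq_of_one_mem_perSet hf h1
  refine ⟨fun n => χ n, ⟨⟨χ, fun _ => rfl⟩, hfχ⟩, ?_⟩
  rintro χ' ⟨⟨ψ, hχ'⟩, hfχ'⟩
  have hψ : ψ = χ := DirichletCharacter.eq_of_forall_pos_coprime fun n hn hnm =>
    (hχ' n ▸ hfχ' n hn hnm).symm.trans (hfχ n hn hnm)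
  funext n
  rw [hχ', hψ]

theorem exists_unique_dirichlet_char_of_toeplitz
    (f : ℕ → ℂ) (hf : IsMult f) (hnz : ∃ n : ℕ, f n ≠ 0) (htoe : IsToeplitz f)
    (m : ℕ) (hm : 1 ≤ m) (h1 : 1 ∈ PerSet f m) :
    ∃! χ : ℕ → ℂ, IsDirichletCharFn m χ ∧
      ∀ n : ℕ, 1 ≤ n → Nat.Coprime n m → f n = χ n :=
  exists_unique_dirichlet_char_of_toeplitz_general f hf m hm h1
end
end

section
/- Let f : ℕ → ℂ be a Toeplitz function (not necessarily multiplicative), let p be a prime and b ∈ ℕ. Assume that for every s ≥ 1 there exists M ≥ 1 with s ∈ Per_M(f) and ν_p(M) ≤ b. If n ≥ 1 and K ≥ 1 satisfy n ∈ Per_K(f), then n ∈ Per_{K̄}(f), where K̄ := p^b · (K / p^{ν_p(K)}) (i.e. K̄ is obtained from K by replacing its p-adic valuation by b). -/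
open scoped BigOperators Classical

noncomputable section

/-!
Let `n' ≡ n (mod K̄)` and let `M` be a period of `n'` with `ν_p(M) ≤ b`. Then `gcd(M, K)` divides
`K̄`, so `n' ≡ n (mod gcd(M, K))`, and the Chinese remainder theorem gives `N` with `N ≡ n' (mod M)`
and `N ≡ n (mod K)`; hence `f n' = f N = f n`.
-/

theorem Nat.gcd_dvd_pow_mul_ordCompl_of_factorization_le {M K p b : ℕ} (hM : M ≠ 0)
    (hb : M.factorization p ≤ b) : Nat.gcd M K ∣ p ^ b * ordCompl[p] K := by
  have hgM : (Nat.gcd M K).factorization p ≤ M.factorization p :=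
    (Nat.factorization_le_iff_dvd (Nat.gcd_ne_zero_left hM) hM).2 (Nat.gcd_dvd_left M K) p
  rw [← Nat.ordProj_mul_ordCompl_eq_self (Nat.gcd M K) p]
  exact Nat.mul_dvd_mul (pow_dvd_pow p (hgM.trans hb))
    (Nat.ordCompl_dvd_ordCompl_of_dvd (Nat.gcd_dvd_right M K) p)

theorem PerSet.apply_eq_of_modEq_gcd {f : ℕ → ℂ} {M K n n' : ℕ} (hM : M ≠ 0) (hK : K ≠ 0)
    (hn : n ∈ PerSet f K) (hn' : n' ∈ PerSet f M) (h : n' ≡ n [MOD Nat.gcd M K]) :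
    f n' = f n := by
  obtain ⟨N, hNM, hNK⟩ := Nat.chineseRemainder' h
  -- the CRT solution may be `0`, which lies outside the positions `PerSet` speaks about
  have hpos : 1 ≤ N + M * K := Nat.one_le_iff_ne_zero.2 (by simp [hM, hK])
  calc f n' = f (N + M * K) := (hn'.2 _ hpos ((Nat.add_mul_mod_self_left N M K).trans hNM)).symm
    _ = f n := hn.2 _ hpos ((Nat.add_mul_mod_self_right N M K).trans hNK)

theorem perSet_of_replace_padic_valuation_general
    (f : ℕ → ℂ) (p : ℕ) (b : ℕ)
    (h : ∀ s : ℕ, 1 ≤ s → ∃ M : ℕ, 1 ≤ M ∧ s ∈ PerSet f M ∧ M.factorization p ≤ b)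
    (n K : ℕ) (hK : 1 ≤ K) (hnK : n ∈ PerSet f K) :
    n ∈ PerSet f (p ^ b * (K / p ^ K.factorization p)) := by
  refine ⟨hnK.1, fun n' hn' hmod => ?_⟩
  obtain ⟨M, hM, hn'M, hMb⟩ := h n' hn'
  have hgcd := Nat.gcd_dvd_pow_mul_ordCompl_of_factorization_le (K := K) (by omega) hMb
  exact PerSet.apply_eq_of_modEq_gcd (by omega) (by omega) hnK hn'M (Nat.ModEq.of_dvd hgcd hmod)

theorem perSet_of_replace_padic_valuation
    (f : ℕ → ℂ) (htoe : IsToeplitz f) (p : ℕ) (hp : Nat.Prime p) (b : ℕ)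
    (h : ∀ s : ℕ, 1 ≤ s → ∃ M : ℕ, 1 ≤ M ∧ s ∈ PerSet f M ∧ M.factorization p ≤ b)
    (n K : ℕ) (hn : 1 ≤ n) (hK : 1 ≤ K) (hnK : n ∈ PerSet f K) :
    n ∈ PerSet f (p ^ b * (K / p ^ K.factorization p)) :=
  perSet_of_replace_padic_valuation_general f p b h n K hK hnK
end
end

section
/- Let θ be a Dirichlet character of modulus m, let q_1, …, q_u be distinct primes, and let κ_1, …, κ_u : ℕ → ℂ be arbitrary functions. Let f be the multiplicative function determined by f(1) = 1, f(p^k) = θ(p^k) for every prime p ∉ {q_1, …, q_u} and k ≥ 1, and f(q_j^k) = κ_j(k) for j = 1, …, u and k ≥ 1. Then: (a) for every n ≥ 1, writing v_j := ν_{q_j}(n), one has n ∈ Per_T(f) with T := q_1^{v_1+1} ⋯ q_u^{v_u+1} · m; (b) consequently f is Toeplitz. -/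
/-! Let `S` be the set of the primes `q j`. Every `n ≥ 1` is its `S`-part `Q = ∏_{p ∈ S} p ^ ν_p(n)`
times a cofactor with no prime factor in `S`, on which `f` agrees with the completely multiplicative
`θ`; hence `f n = f Q * θ (n / Q)`. If `n' ≡ n (mod T)`, then `n' ≡ n (mod p ^ (ν_p(n) + 1))` forces
`ν_p(n') = ν_p(n)` for `p ∈ S`, so `n'` has the same `S`-part `Q`, and `Q * m ∣ T` gives
`n' / Q ≡ n / Q (mod m)`. -/

open scoped BigOperators Classical

noncomputable section

open Finset

def sPart (S : Finset ℕ) (n : ℕ) : ℕ := ∏ p ∈ S, p ^ n.factorization p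

theorem Finset.prod_image_dvd_prod_comp {ι : Type*} (s : Finset ι) (g : ι → ℕ) (h : ℕ → ℕ) :
    (∏ p ∈ s.image g, h p) ∣ ∏ i ∈ s, h (g i) := by
  rw [prod_comp h g]
  refine prod_dvd_prod_of_dvd h _ fun p hp => dvd_pow_self (h p) ?_
  obtain ⟨i, hi, rfl⟩ := mem_image.1 hp
  exact card_ne_zero.2 ⟨i, mem_filter.2 ⟨hi, rfl⟩⟩

theorem Nat.Prime.factorization_eq_of_modEq {p n n' : ℕ} (hp : p.Prime) (hn : n ≠ 0)
    (hn' : n' ≠ 0) (h : n' ≡ n [MOD p ^ (n.factorization p + 1)]) :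
    n'.factorization p = n.factorization p := by
  have hle : p ^ n.factorization p ∣ n' :=
    (h.dvd_iff (pow_dvd_pow p (Nat.le_succ _))).2 (Nat.ordProj_dvd n p)
  have hnot : ¬ p ^ (n.factorization p + 1) ∣ n' :=
    fun hd => Nat.pow_succ_factorization_not_dvd hn hp ((h.dvd_iff dvd_rfl).1 hd)
  rw [hp.pow_dvd_iff_le_factorization hn'] at hle hnot
  omega

theorem Nat.ModEq.div_of_dvd {a b c m : ℕ} (h : a ≡ b [MOD c * m]) (ha : c ∣ a) (hb : c ∣ b) :
    a / c ≡ b / c [MOD m] := by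
  rcases eq_or_ne c 0 with rfl | hc
  · simp [Nat.ModEq]
  obtain ⟨a, rfl⟩ := ha
  obtain ⟨b, rfl⟩ := hb
  rwa [Nat.mul_div_cancel_left _ (Nat.pos_of_ne_zero hc),
    Nat.mul_div_cancel_left _ (Nat.pos_of_ne_zero hc), ← Nat.ModEq.mul_left_cancel_iff' hc]

theorem sPart_dvd {S : Finset ℕ} (hS : ∀ p ∈ S, p.Prime) (n : ℕ) : sPart S n ∣ n := by
  refine prod_dvd_of_isRelPrime (fun p hp r hr hpr => ?_) fun p _ => Nat.ordProj_dvd n p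
  exact Nat.coprime_iff_isRelPrime.1 <|
    ((Nat.coprime_primes (hS p hp) (hS r hr)).2 hpr).pow _ _

theorem not_dvd_div_sPart {S : Finset ℕ} (hS : ∀ p ∈ S, p.Prime) {n p : ℕ} (hn : n ≠ 0)
    (hp : p ∈ S) : ¬ p ∣ n / sPart S n := by
  intro hdvd
  apply Nat.pow_succ_factorization_not_dvd hn (hS p hp)
  calc p ^ (n.factorization p + 1) = p ^ n.factorization p * p := pow_succ _ _
    _ ∣ sPart S n * (n / sPart S n) := mul_dvd_mul (dvd_prod_of_mem _ hp) hdvd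
    _ = n := Nat.mul_div_cancel' (sPart_dvd hS n)

theorem sPart_eq_of_modEq {S : Finset ℕ} (hS : ∀ p ∈ S, p.Prime) {n n' : ℕ} (hn : n ≠ 0)
    (hn' : n' ≠ 0) (h : ∀ p ∈ S, n' ≡ n [MOD p ^ (n.factorization p + 1)]) :
    sPart S n' = sPart S n :=
  prod_congr rfl fun p hp => by rw [(hS p hp).factorization_eq_of_modEq hn hn' (h p hp)]

theorem IsDirichletCharFn.isMult {m : ℕ} {θ : ℕ → ℂ} (hθ : IsDirichletCharFn m θ) :
    IsMult θ := by
  obtain ⟨χ, hχ⟩ := hθ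
  exact ⟨by simp [hχ], fun a b _ => by simp [hχ]⟩

theorem IsDirichletCharFn.eq_of_modEq {m : ℕ} {θ : ℕ → ℂ} (hθ : IsDirichletCharFn m θ)
    {a b : ℕ} (h : a ≡ b [MOD m]) : θ a = θ b := by
  obtain ⟨χ, hχ⟩ := hθ
  rw [hχ, hχ, (ZMod.natCast_eq_natCast_iff a b m).2 h]

theorem IsMult.eq_of_forall_not_dvd {f g : ℕ → ℂ} (hf : IsMult f) (hg : IsMult g)
    {S : Finset ℕ} (hfg : ∀ p k, p.Prime → 1 ≤ k → p ∉ S → f (p ^ k) = g (p ^ k))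
    {r : ℕ} (hr : r ≠ 0) (hrS : ∀ p ∈ S, ¬ p ∣ r) : f r = g r := by
  rw [Nat.multiplicative_factorization f hf.2 hf.1 hr,
    Nat.multiplicative_factorization g hg.2 hg.1 hr]
  refine Finsupp.prod_congr fun p hp => ?_
  have hp' : p ∈ r.primeFactors := by simpa using hp
  exact hfg p _ (Nat.prime_of_mem_primeFactors hp')
    (Nat.one_le_iff_ne_zero.2 (Finsupp.mem_support_iff.1 hp))
    fun hpS => hrS p hpS (Nat.dvd_of_mem_primeFactors hp')

theorem IsMult.apply_eq_mul_sPart {f g : ℕ → ℂ} (hf : IsMult f) (hg : IsMult g)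
    {S : Finset ℕ} (hS : ∀ p ∈ S, p.Prime)
    (hfg : ∀ p k, p.Prime → 1 ≤ k → p ∉ S → f (p ^ k) = g (p ^ k)) {n : ℕ} (hn : n ≠ 0) :
    f n = f (sPart S n) * g (n / sPart S n) := by
  have hcop : Nat.Coprime (sPart S n) (n / sPart S n) :=
    Nat.Coprime.prod_left fun p hp => Nat.Coprime.pow_left _ <|
      (Nat.Prime.coprime_iff_not_dvd (hS p hp)).2 (not_dvd_div_sPart hS hn hp)
  have hr : n / sPart S n ≠ 0 :=
    (Nat.div_ne_zero_iff_of_dvd (sPart_dvd hS n)).2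
      ⟨hn, ne_zero_of_dvd_ne_zero hn (sPart_dvd hS n)⟩
  conv_lhs => rw [← Nat.mul_div_cancel' (sPart_dvd hS n)]
  rw [hf.2 _ _ hcop, hf.eq_of_forall_not_dvd hg hfg hr fun p hp => not_dvd_div_sPart hS hn hp]

theorem perSet_subset_of_dvd (f : ℕ → ℂ) {M N : ℕ} (h : M ∣ N) : PerSet f M ⊆ PerSet f N :=
  fun _ ⟨hn, hper⟩ => ⟨hn, fun n' hn' hmod => hper n' hn' (Nat.ModEq.of_dvd h hmod)⟩

theorem IsMult.mem_perSet_of_eq_dirichletCharFn {m : ℕ} {θ f : ℕ → ℂ}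
    (hθ : IsDirichletCharFn m θ) (hf : IsMult f) {S : Finset ℕ} (hS : ∀ p ∈ S, p.Prime)
    (hfθ : ∀ p k, p.Prime → 1 ≤ k → p ∉ S → f (p ^ k) = θ (p ^ k)) {n : ℕ} (hn : 1 ≤ n) :
    n ∈ PerSet f ((∏ p ∈ S, p ^ (n.factorization p + 1)) * m) := by
  refine ⟨hn, fun n' hn' hrem => ?_⟩
  have hmod : n' ≡ n [MOD (∏ p ∈ S, p ^ (n.factorization p + 1)) * m] := hrem
  have hT : (∏ p ∈ S, p ^ (n.factorization p + 1)) * m = sPart S n * ((∏ p ∈ S, p) * m) := by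
    rw [sPart, ← mul_assoc, ← prod_mul_distrib]
    simp only [pow_succ]
  have hQ : sPart S n' = sPart S n := sPart_eq_of_modEq hS (by omega) (by omega) fun p hp =>
    hmod.of_dvd <| dvd_mul_of_dvd_left (dvd_prod_of_mem (fun p => p ^ (n.factorization p + 1)) hp) m
  have hquot : n' / sPart S n ≡ n / sPart S n [MOD m] :=
    (hT ▸ hmod).div_of_dvd (hQ ▸ sPart_dvd hS n') (sPart_dvd hS n) |>.of_dvd (dvd_mul_left m _)
  rw [hf.apply_eq_mul_sPart hθ.isMult hS hfθ (by omega : n' ≠ 0),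
    hf.apply_eq_mul_sPart hθ.isMult hS hfθ (by omega : n ≠ 0), hQ, hθ.eq_of_modEq hquot]

theorem modified_character_is_toeplitz_general
    (m : ℕ) (hm : 1 ≤ m) (θ : ℕ → ℂ) (hθ : IsDirichletCharFn m θ)
    (u : ℕ) (q : Fin u → ℕ) (hq : ∀ j, Nat.Prime (q j))
    (f : ℕ → ℂ) (hf : IsMult f)
    (hfθ : ∀ (p k : ℕ), Nat.Prime p → 1 ≤ k → (∀ j, p ≠ q j) → f (p ^ k) = θ (p ^ k)) :
    (∀ n : ℕ, 1 ≤ n →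
      n ∈ PerSet f ((∏ j, q j ^ (n.factorization (q j) + 1)) * m)) ∧
    IsToeplitz f := by
  have hS : ∀ p ∈ univ.image q, p.Prime := by simpa using hq
  have hfS : ∀ p k, p.Prime → 1 ≤ k → p ∉ univ.image q → f (p ^ k) = θ (p ^ k) :=
    fun p k hp hk hpS => hfθ p k hp hk fun j hj => hpS (mem_image.2 ⟨j, mem_univ j, hj.symm⟩)
  have hper : ∀ n, 1 ≤ n → n ∈ PerSet f ((∏ j, q j ^ (n.factorization (q j) + 1)) * m) :=
    fun n hn => perSet_subset_of_dvd f
      (mul_dvd_mul_right (prod_image_dvd_prod_comp univ q fun p => p ^ (n.factorization p + 1)) m)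
      (hf.mem_perSet_of_eq_dirichletCharFn hθ hS hfS hn)
  refine ⟨hper, fun n hn => ⟨_, ?_, hper n hn⟩⟩
  exact Nat.mul_pos (prod_pos fun j _ => pow_pos (hq j).pos _) hm

theorem modified_character_is_toeplitz
    (m : ℕ) (hm : 1 ≤ m) (θ : ℕ → ℂ) (hθ : IsDirichletCharFn m θ)
    (u : ℕ) (q : Fin u → ℕ) (hq : ∀ j, Nat.Prime (q j)) (hqinj : Function.Injective q)
    (κ : Fin u → ℕ → ℂ) (f : ℕ → ℂ) (hf : IsMult f)
    (hfθ : ∀ (p k : ℕ), Nat.Prime p → 1 ≤ k → (∀ j, p ≠ q j) → f (p ^ k) = θ (p ^ k))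
    (hfκ : ∀ (j : Fin u) (k : ℕ), 1 ≤ k → f (q j ^ k) = κ j k) :
    (∀ n : ℕ, 1 ≤ n →
      n ∈ PerSet f ((∏ j, q j ^ (n.factorization (q j) + 1)) * m)) ∧
    IsToeplitz f :=
  modified_character_is_toeplitz_general m hm θ hθ u q hq f hf hfθ
end
end

section
/- Let f : ℕ → ℂ be a nonzero multiplicative Toeplitz function and let m ≥ 1 satisfy 1 ∈ Per_m(f). Then every n ≥ 1 with gcd(n, m) = 1 satisfies n ∈ Per_m(f) and f(n) ≠ 0. Moreover, if f is completely multiplicative (f(ab) = f(a)f(b) for all a, b), then f(n)^{φ(m)} = 1 for every n with gcd(n, m) = 1, where φ is Euler's totient function. -/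
open scoped BigOperators Classical

noncomputable section

/- Proof idea: for `n` prime to `m` and `n' ≡ n (mod m)`, the Chinese remainder theorem gives `r ≥ 1`
prime to `n n'` with `r n ≡ 1 (mod m)`. Since `1 ∈ Per_m(f)`, multiplicativity yields
`f r * f n = f (r n) = f 1 = 1` and likewise `f r * f n' = 1`, so `f n = f n' ≠ 0`.
If `f` is completely multiplicative, `f n ^ φ m = f (n ^ φ m) = f 1 = 1` by Euler's theorem. -/

open Nat in
theorem Nat.exists_pos_coprime_mul_modEq_one_s5 {n m K : ℕ} (hm : 0 < m) (hK : 0 < K)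
    (hn : n.Coprime m) (hKm : K.Coprime m) : ∃ r, 0 < r ∧ r.Coprime K ∧ r * n ≡ 1 [MOD m] := by
  obtain ⟨r, hrm, hrK⟩ := Nat.chineseRemainder hKm.symm (n ^ (φ m - 1)) 1
  refine ⟨r + K * m, by positivity, ?_, ?_⟩
  · rw [Nat.coprime_add_mul_left_left, Nat.Coprime, hrK.gcd_eq, Nat.gcd_one_left]
  · have hrm' : r + K * m ≡ n ^ (φ m - 1) [MOD m] := (Nat.add_mul_mod_self_right r K m).trans hrm
    calc (r + K * m) * n ≡ n ^ (φ m - 1) * n [MOD m] := hrm'.mul_right n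
      _ = n ^ φ m := by rw [← pow_succ, Nat.sub_add_cancel (Nat.totient_pos.mpr hm)]
      _ ≡ 1 [MOD m] := Nat.ModEq.pow_totient hn

namespace IsMult

variable {f : ℕ → ℂ} {m : ℕ}

theorem apply_mul_apply_eq_one_of_mul_modEq_one (hf : IsMult f) (h1 : 1 ∈ PerSet f m)
    {r n : ℕ} (hr : 0 < r) (hn : 0 < n) (hrn : r.Coprime n) (h : r * n ≡ 1 [MOD m]) :
    f r * f n = 1 := by
  rw [← hf.2 r n hrn, h1.2 _ (Nat.mul_pos hr hn) h, hf.1]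

theorem apply_eq_of_modEq_and_ne_zero (hf : IsMult f) (h1 : 1 ∈ PerSet f m) (hm : 0 < m)
    {n n' : ℕ} (hn : 0 < n) (hn' : 0 < n') (hnm : n.Coprime m) (h : n' ≡ n [MOD m]) :
    f n' = f n ∧ f n ≠ 0 := by
  have hn'm : n'.Coprime m := by rw [Nat.Coprime, h.gcd_eq]; exact hnm
  obtain ⟨r, hr, hrK, hrn⟩ := Nat.exists_pos_coprime_mul_modEq_one_s5 hm (Nat.mul_pos hn hn')
    hnm (Nat.Coprime.mul_left hnm hn'm)
  have hfn : f r * f n = 1 := hf.apply_mul_apply_eq_one_of_mul_modEq_one h1 hr hn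
    (hrK.coprime_dvd_right (dvd_mul_right n n')) hrn
  have hfn' : f r * f n' = 1 := hf.apply_mul_apply_eq_one_of_mul_modEq_one h1 hr hn'
    (hrK.coprime_dvd_right (dvd_mul_left n' n)) (h.mul_left r |>.trans hrn)
  exact ⟨mul_left_cancel₀ (left_ne_zero_of_mul_eq_one hfn) (hfn'.trans hfn.symm),
    right_ne_zero_of_mul_eq_one hfn⟩

end IsMult

theorem coprime_mem_perSet_and_nonzero_general
    (f : ℕ → ℂ) (hf : IsMult f)
    (m : ℕ) (hm : 1 ≤ m) (h1 : 1 ∈ PerSet f m) :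
    (∀ n : ℕ, 1 ≤ n → Nat.Coprime n m → n ∈ PerSet f m ∧ f n ≠ 0) ∧
    ((∀ a b : ℕ, f (a * b) = f a * f b) →
      ∀ n : ℕ, 1 ≤ n → Nat.Coprime n m → f n ^ Nat.totient m = 1) := by
  refine ⟨fun n hn hnm => ⟨⟨hn, fun n' hn' h => ?_⟩, ?_⟩, fun hcm n hn hnm => ?_⟩
  · exact (hf.apply_eq_of_modEq_and_ne_zero h1 hm hn hn' hnm h).1
  · exact (hf.apply_eq_of_modEq_and_ne_zero h1 hm hn hn hnm rfl).2
  · have hpow : f (n ^ Nat.totient m) = f n ^ Nat.totient m :=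
      map_pow (⟨⟨f, hf.1⟩, hcm⟩ : ℕ →* ℂ) n _
    rw [← hpow, h1.2 _ (Nat.pow_pos hn) (Nat.ModEq.pow_totient hnm), hf.1]

theorem coprime_mem_perSet_and_nonzero
    (f : ℕ → ℂ) (hf : IsMult f) (hnz : ∃ n : ℕ, f n ≠ 0) (htoe : IsToeplitz f)
    (m : ℕ) (hm : 1 ≤ m) (h1 : 1 ∈ PerSet f m) :
    (∀ n : ℕ, 1 ≤ n → Nat.Coprime n m → n ∈ PerSet f m ∧ f n ≠ 0) ∧
    ((∀ a b : ℕ, f (a * b) = f a * f b) →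
      ∀ n : ℕ, 1 ≤ n → Nat.Coprime n m → f n ^ Nat.totient m = 1) :=
  coprime_mem_perSet_and_nonzero_general f hf m hm h1
end
end

section
/- Let f : ℕ → ℂ be a multiplicative Toeplitz function. Let n, k, m ≥ 1 be such that n ∈ Per_m(f), nk ∈ Per_m(f) and gcd(n, k, m) = 1. Then f(nk) = f(n)·f(k). -/
open scoped BigOperators Classical

noncomputable section

/-!
Since `gcd(n, k, m) = 1`, the progression `n mod m` contains some `n'` coprime to `k`; then
`f(nk) = f(n'k) = f(n') f(k) = f(n) f(k)`, the outer equalities because `n, nk ∈ Per_m(f)`.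
-/

-- Take `t` to be the product of the primes of `k` that do not divide `n`.
theorem Nat.exists_coprime_add_mul {n k m : ℕ} (hk : k ≠ 0) (h : Nat.Coprime n (Nat.gcd k m)) :
    ∃ t, Nat.Coprime (n + m * t) k := by
  set s := k.primeFactors.filter (fun p => ¬ p ∣ n)
  refine ⟨∏ p ∈ s, p, Nat.coprime_of_dvd fun p hp hpx hpk => ?_⟩
  by_cases hpn : p ∣ n
  · have hpt : ¬ p ∣ ∏ q ∈ s, q := fun hpt => by
      obtain ⟨q, hqs, hpq⟩ := (hp.prime.dvd_finsetProd_iff _).1 hpt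
      have hq := Finset.mem_filter.1 hqs
      rw [← (Nat.prime_dvd_prime_iff_eq hp (Nat.prime_of_mem_primeFactors hq.1)).1 hpq] at hq
      exact hq.2 hpn
    have hpm : p ∣ m := (hp.dvd_mul.1 ((Nat.dvd_add_right hpn).1 hpx)).resolve_right hpt
    exact hp.not_dvd_one (h ▸ Nat.dvd_gcd hpn (Nat.dvd_gcd hpk hpm))
  · have hpt : p ∣ ∏ q ∈ s, q :=
      Finset.dvd_prod_of_mem _ (Finset.mem_filter.2 ⟨Nat.mem_primeFactors.2 ⟨hp, hpk, hk⟩, hpn⟩)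
    exact hpn ((Nat.dvd_add_left (hpt.mul_left m)).1 hpx)

theorem apply_add_mul_of_mem_perSet {f : ℕ → ℂ} {m n : ℕ} (h : n ∈ PerSet f m) (t : ℕ) :
    f (n + m * t) = f n :=
  h.2 _ (h.1.trans (Nat.le_add_right _ _)) (Nat.add_mul_mod_self_left n m t)

theorem mult_on_perSet_general
    (f : ℕ → ℂ) (hf : IsMult f)
    (n k m : ℕ) (hk : 1 ≤ k)
    (hnm : n ∈ PerSet f m) (hnkm : n * k ∈ PerSet f m)
    (hcop : Nat.gcd n (Nat.gcd k m) = 1) :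
    f (n * k) = f n * f k := by
  obtain ⟨t, ht⟩ := Nat.exists_coprime_add_mul (Nat.one_le_iff_ne_zero.1 hk) hcop
  calc f (n * k) = f (n * k + m * (t * k)) := (apply_add_mul_of_mem_perSet hnkm _).symm
    _ = f ((n + m * t) * k) := by congr 1; ring
    _ = f (n + m * t) * f k := hf.2 _ _ ht
    _ = f n * f k := by rw [apply_add_mul_of_mem_perSet hnm]

theorem mult_on_perSet
    (f : ℕ → ℂ) (hf : IsMult f) (htoe : IsToeplitz f)
    (n k m : ℕ) (hn : 1 ≤ n) (hk : 1 ≤ k) (hm : 1 ≤ m)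
    (hnm : n ∈ PerSet f m) (hnkm : n * k ∈ PerSet f m)
    (hcop : Nat.gcd n (Nat.gcd k m) = 1) :
    f (n * k) = f n * f k :=
  mult_on_perSet_general f hf n k m hk hnm hnkm hcop
end
end

section
/- Let f : ℕ → ℂ be a nonzero multiplicative Toeplitz function and let m ≥ 1 satisfy 1 ∈ Per_m(f). Let n' ≥ 1 with gcd(n', m) = 1 and let t ≥ 1 be such that every prime divisor of t divides m. Then t·n' ∈ Per_{t·m}(f). In particular, every position n ≥ 1 has a period all of whose prime divisors divide m. -/
open scoped BigOperators Classical

noncomputable section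

/-!
If `1 ∈ Per_m(f)` then `f = 1` on every `x ≡ 1 (mod m)`. Given `a ≡ b (mod m)` with `b` prime to
`m`, pick a prime `c > ab` with `bc ≡ 1 (mod m)` (Dirichlet); multiplicativity gives
`f a f c = f (ac) = 1 = f (bc) = f b f c`, so `f a = f b`. Hence `f` is constant on every reduced
residue class mod `m`. If `n'' ≡ t n' (mod tm)` then `n'' = t a` with `a ≡ n' (mod m)`, and `t` is
prime to both `a` and `n'` because its prime factors divide `m`; so `f n'' = f t f a = f t f n'`.
Every `n` splits as `n = g u` with the primes of `g` dividing `m` and `u` prime to `m`, and then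
`gm` is a period of `n`.
-/

lemma coprime_of_prime_dvd_imp_dvd {t x m : ℕ} (hspec : ∀ p : ℕ, p.Prime → p ∣ t → p ∣ m)
    (hx : x.Coprime m) : t.Coprime x :=
  Nat.coprime_of_dvd fun p hp hpt hpx =>
    Nat.Prime.not_coprime_iff_dvd.mpr ⟨p, hp, hpx, hspec p hp hpt⟩ hx

lemma exists_eq_mul_coprime (m : ℕ) {n : ℕ} (hn : n ≠ 0) :
    ∃ g u : ℕ, n = g * u ∧ (∀ p : ℕ, p.Prime → p ∣ g → p ∣ m) ∧ u.Coprime m := by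
  induction n using Nat.strong_induction_on with
  | _ n ih =>
  by_cases hnm : n.Coprime m
  · exact ⟨1, n, (one_mul n).symm, fun p hp h => absurd h hp.not_dvd_one, hnm⟩
  obtain ⟨p, hp, ⟨k, rfl⟩, hpm⟩ := Nat.Prime.not_coprime_iff_dvd.mp hnm
  have hk : k ≠ 0 := right_ne_zero_of_mul hn
  obtain ⟨g, u, rfl, hg, hu⟩ := ih k (lt_mul_left (Nat.pos_of_ne_zero hk) hp.one_lt) hk
  refine ⟨p * g, u, (mul_assoc p g u).symm, fun q hq hqpg => ?_, hu⟩
  rcases hq.dvd_mul.mp hqpg with hqp | hqg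
  · rwa [(Nat.prime_dvd_prime_iff_eq hq hp).mp hqp]
  · exact hg q hq hqg

lemma exists_prime_gt_mul_modEq_one {b m : ℕ} (hm : m ≠ 0) (hb : b.Coprime m) (n : ℕ) :
    ∃ p > n, p.Prime ∧ b * p ≡ 1 [MOD m] := by
  have : NeZero m := ⟨hm⟩
  obtain ⟨p, hpn, hp, hpb⟩ :=
    Nat.forall_exists_prime_gt_and_eq_mod (ZMod.unitOfCoprime b hb)⁻¹.isUnit n
  refine ⟨p, hpn, hp, (ZMod.natCast_eq_natCast_iff _ _ _).mp ?_⟩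
  rw [Nat.cast_mul, hpb, ← ZMod.coe_unitOfCoprime b hb, Units.mul_inv, Nat.cast_one]

section

variable {f : ℕ → ℂ} {m : ℕ}

lemma apply_eq_one_of_one_mem_perSet (hf : IsMult f) (h1 : 1 ∈ PerSet f m) {x : ℕ} (hx : 1 ≤ x)
    (hxm : x ≡ 1 [MOD m]) : f x = 1 :=
  (h1.2 x hx hxm).trans hf.1

lemma apply_eq_of_modEq_of_coprime (hf : IsMult f) (hm : m ≠ 0) (h1 : 1 ∈ PerSet f m)
    {a b : ℕ} (ha : 1 ≤ a) (hb : 1 ≤ b) (hbm : b.Coprime m) (hab : a ≡ b [MOD m]) :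
    f a = f b := by
  obtain ⟨c, hc, hcp, hbc⟩ := exists_prime_gt_mul_modEq_one hm hbm (a * b)
  have hc0 : 0 < c := hcp.pos
  have hac : a.Coprime c :=
    (Nat.coprime_of_lt_prime (by omega) ((Nat.le_mul_of_pos_right a hb).trans_lt hc) hcp).symm
  have hbc' : b.Coprime c :=
    (Nat.coprime_of_lt_prime (by omega) ((Nat.le_mul_of_pos_left b ha).trans_lt hc) hcp).symm
  have hfb : f b * f c = 1 := by
    rw [← hf.2 b c hbc']
    exact apply_eq_one_of_one_mem_perSet hf h1 (Nat.mul_pos hb hc0) hbc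
  have hfa : f a * f c = 1 := by
    rw [← hf.2 a c hac]
    exact apply_eq_one_of_one_mem_perSet hf h1 (Nat.mul_pos ha hc0) ((hab.mul_right c).trans hbc)
  exact mul_right_cancel₀ (right_ne_zero_of_mul_eq_one hfb) (hfa.trans hfb.symm)

lemma mul_mem_perSet (hf : IsMult f) (hm : m ≠ 0) (h1 : 1 ∈ PerSet f m) {n' t : ℕ}
    (hn' : 1 ≤ n') (hcop : n'.Coprime m) (ht : 1 ≤ t)
    (hspec : ∀ p : ℕ, p.Prime → p ∣ t → p ∣ m) : t * n' ∈ PerSet f (t * m) := by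
  refine ⟨Nat.mul_pos ht hn', fun n'' hn'' hmod => ?_⟩
  have hmod : n'' ≡ t * n' [MOD t * m] := hmod
  obtain ⟨a, rfl⟩ : t ∣ n'' := Nat.modEq_zero_iff_dvd.mp
    ((hmod.of_mul_right m).trans (Nat.modEq_zero_iff_dvd.mpr (dvd_mul_right t n')))
  have ha : 1 ≤ a := Nat.pos_of_mul_pos_left hn''
  have han' : a ≡ n' [MOD m] := Nat.ModEq.mul_left_cancel' (by omega) hmod
  have ham : a.Coprime m := by rwa [Nat.Coprime, han'.gcd_eq]
  rw [hf.2 t a (coprime_of_prime_dvd_imp_dvd hspec ham),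
    hf.2 t n' (coprime_of_prime_dvd_imp_dvd hspec hcop),
    apply_eq_of_modEq_of_coprime hf hm h1 ha hn' hcop han']

end

theorem perSet_of_spectrum_multiple_general
    (f : ℕ → ℂ) (hf : IsMult f)
    (m : ℕ) (hm : 1 ≤ m) (h1 : 1 ∈ PerSet f m)
    (n' : ℕ) (hn' : 1 ≤ n') (hcop : Nat.Coprime n' m)
    (t : ℕ) (ht : 1 ≤ t) (hspec : ∀ p : ℕ, Nat.Prime p → p ∣ t → p ∣ m) :
    t * n' ∈ PerSet f (t * m) ∧
    ∀ n : ℕ, 1 ≤ n → ∃ T : ℕ, 1 ≤ T ∧ n ∈ PerSet f T ∧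
      ∀ p : ℕ, Nat.Prime p → p ∣ T → p ∣ m := by
  refine ⟨mul_mem_perSet hf (by omega) h1 hn' hcop ht hspec, fun n hn => ?_⟩
  obtain ⟨g, u, rfl, hg, hu⟩ := exists_eq_mul_coprime m (by omega : n ≠ 0)
  have hg0 : 1 ≤ g := Nat.pos_of_mul_pos_right hn
  have hu0 : 1 ≤ u := Nat.pos_of_mul_pos_left hn
  refine ⟨g * m, Nat.mul_pos hg0 hm, mul_mem_perSet hf (by omega) h1 hu0 hu hg0 hg, ?_⟩
  exact fun p hp hpT => (hp.dvd_mul.mp hpT).elim (hg p hp) id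

theorem perSet_of_spectrum_multiple
    (f : ℕ → ℂ) (hf : IsMult f) (hnz : ∃ n : ℕ, f n ≠ 0) (htoe : IsToeplitz f)
    (m : ℕ) (hm : 1 ≤ m) (h1 : 1 ∈ PerSet f m)
    (n' : ℕ) (hn' : 1 ≤ n') (hcop : Nat.Coprime n' m)
    (t : ℕ) (ht : 1 ≤ t) (hspec : ∀ p : ℕ, Nat.Prime p → p ∣ t → p ∣ m) :
    t * n' ∈ PerSet f (t * m) ∧
    ∀ n : ℕ, 1 ≤ n → ∃ T : ℕ, 1 ≤ T ∧ n ∈ PerSet f T ∧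
      ∀ p : ℕ, Nat.Prime p → p ∣ T → p ∣ m :=
  perSet_of_spectrum_multiple_general f hf m hm h1 n' hn' hcop t ht hspec
end
end

section
/- Let f : ℕ → ℂ be a nonzero multiplicative Toeplitz function. Then there exists m₁ ≥ 1 such that for every m ≥ 1, one has 1 ∈ Per_m(f) if and only if m₁ divides m; that is, the set {m ≥ 1 : 1 ∈ Per_m(f)} equals the set of positive multiples of m₁. -/
open scoped BigOperators Classical

noncomputable section

/-! The set of moduli `m` with `1 ∈ Per_m(f)` is closed under multiples and under `gcd`; hence
it consists of the multiples of its least element. For the `gcd`, take `n ≡ 1 (mod gcd a b)`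
with a period `c` of position `n`. Splitting `C = lcm(a, b, c)` prime by prime into coprime
factors `A * B` according to whether `a` or `b` has the smaller valuation, the Chinese remainder
theorem gives coprime `u ≡ 1 (mod a)` and `v ≡ 1 (mod b)` with `u * v ≡ n (mod c)`, so
`f n = f u * f v = f 1 * f 1 = 1`. -/

namespace Nat

theorem exists_coprime_mul_eq_factorization_filter {C : ℕ} (hC : C ≠ 0) (P : ℕ → Prop)
    [DecidablePred P] :
    ∃ A B : ℕ, A * B = C ∧ A.Coprime B ∧
      A.factorization = C.factorization.filter P ∧
      B.factorization = C.factorization.filter (¬P ·) := by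
  have hle (Q : ℕ → Prop) [DecidablePred Q] : C.factorization.filter Q ≤ C.factorization :=
    fun p => by rw [Finsupp.filter_apply]; split_ifs <;> simp
  have hAB : (C.factorization.filter P).prod (· ^ ·) *
      (C.factorization.filter (¬P ·)).prod (· ^ ·) = C := by
    rw [Finsupp.prod_filter_mul_prod_filter_not, prod_factorization_pow_eq_self hC]
  refine ⟨_, _, hAB, coprime_of_dvd fun p hp hpA hpB => ?_,
    factorization_prod_pow_eq_self_of_le_factorization (hle P),
    factorization_prod_pow_eq_self_of_le_factorization (hle _)⟩
  have hA := hp.factorization_pos_of_dvd (left_ne_zero_of_mul (hAB ▸ hC)) hpA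
  have hB := hp.factorization_pos_of_dvd (right_ne_zero_of_mul (hAB ▸ hC)) hpB
  rw [factorization_prod_pow_eq_self_of_le_factorization (hle P), Finsupp.filter_apply] at hA
  rw [factorization_prod_pow_eq_self_of_le_factorization (hle _), Finsupp.filter_apply] at hB
  by_cases hPp : P p <;> simp [hPp] at hA hB

theorem exists_coprime_mul_eq_gcd_dvd_gcd {a b C : ℕ} (ha : a ≠ 0) (hb : b ≠ 0) (hC : C ≠ 0) :
    ∃ A B : ℕ, A * B = C ∧ A.Coprime B ∧ gcd a A ∣ gcd a b ∧ gcd b B ∣ gcd a b := by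
  obtain ⟨A, B, hAB, hcop, hA, hB⟩ :=
    exists_coprime_mul_eq_factorization_filter hC fun p => a.factorization p ≤ b.factorization p
  refine ⟨A, B, hAB, hcop, ?_, ?_⟩
  · rw [← factorization_le_iff_dvd (gcd_ne_zero_left ha) (gcd_ne_zero_left ha),
      factorization_gcd ha (left_ne_zero_of_mul (hAB ▸ hC)), factorization_gcd ha hb]
    intro p
    simp only [Finsupp.inf_apply, hA, Finsupp.filter_apply]
    split_ifs <;> omega
  · rw [← factorization_le_iff_dvd (gcd_ne_zero_left hb) (gcd_ne_zero_left ha),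
      factorization_gcd hb (right_ne_zero_of_mul (hAB ▸ hC)), factorization_gcd ha hb]
    intro p
    simp only [Finsupp.inf_apply, hB, Finsupp.filter_apply]
    split_ifs <;> omega

theorem exists_pos_modEq_and_modEq {m n : ℕ} (hmn : m.Coprime n) (hm : m ≠ 0) (hn : n ≠ 0)
    (a b : ℕ) : ∃ k, 0 < k ∧ k ≡ a [MOD m] ∧ k ≡ b [MOD n] := by
  obtain ⟨k, hka, hkb⟩ := chineseRemainder hmn a b
  refine ⟨k + m * n, by positivity, ?_, ?_⟩
  · exact (add_mul_mod_self_left k m n).trans hka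
  · exact (add_mul_mod_self_right k m n).trans hkb

theorem coprime_of_modEq_one {a m : ℕ} (h : a ≡ 1 [MOD m]) : a.Coprime m := by
  rw [Coprime, h.gcd_eq, gcd_one_left]

theorem ModEq.of_modEq_gcd_of_modEq_gcd {A B d x y : ℕ} (hAB : A.Coprime B) (hd : d ∣ A * B)
    (hA : x ≡ y [MOD gcd d A]) (hB : x ≡ y [MOD gcd d B]) : x ≡ y [MOD d] :=
  ((modEq_and_modEq_iff_modEq_mul
    ((hAB.coprime_dvd_left (gcd_dvd_right d A)).coprime_dvd_right (gcd_dvd_right d B))).mp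
    ⟨hA, hB⟩).of_dvd (dvd_gcd_mul_gcd_iff_dvd_mul.mpr hd)

theorem exists_coprime_modEq_swap {A B : ℕ} (hAB : A.Coprime B) (hA : A ≠ 0) (hB : B ≠ 0)
    (n : ℕ) :
    ∃ u v, 0 < u ∧ 0 < v ∧ u.Coprime v ∧
      u ≡ n [MOD A] ∧ u ≡ 1 [MOD B] ∧ v ≡ 1 [MOD A] ∧ v ≡ n [MOD B] := by
  obtain ⟨u, hu, huA, huB⟩ := exists_pos_modEq_and_modEq hAB hA hB n 1
  -- `v ≡ 1 (mod u)` makes `u` and `v` coprime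
  obtain ⟨v, hv, hvAu, hvB⟩ := exists_pos_modEq_and_modEq
    (hAB.mul_left (coprime_of_modEq_one huB)) (mul_ne_zero hA hu.ne') hB 1 n
  exact ⟨u, v, hu, hv, (coprime_of_modEq_one (hvAu.of_dvd (dvd_mul_left u A))).symm,
    huA, huB, hvAu.of_dvd (dvd_mul_right A u), hvB⟩

end Nat

theorem mem_perSet_of_dvd {f : ℕ → ℂ} {n m m' : ℕ} (h : m ∣ m') (hm : n ∈ PerSet f m) :
    n ∈ PerSet f m' :=
  ⟨hm.1, fun n' hn' hmod => hm.2 n' hn' (Nat.ModEq.of_dvd h hmod)⟩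

theorem one_mem_perSet_gcd {f : ℕ → ℂ} (hf : IsMult f) (htoe : IsToeplitz f) {a b : ℕ}
    (ha : a ≠ 0) (hb : b ≠ 0) (hPa : 1 ∈ PerSet f a) (hPb : 1 ∈ PerSet f b) :
    1 ∈ PerSet f (Nat.gcd a b) := by
  refine ⟨le_rfl, fun n hn (hn1 : n ≡ 1 [MOD Nat.gcd a b]) => ?_⟩
  obtain ⟨c, hc, hPc⟩ := htoe n hn
  set C := Nat.lcm (Nat.lcm a b) c
  have haC : a ∣ C := (Nat.dvd_lcm_left a b).trans (Nat.dvd_lcm_left _ c)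
  have hbC : b ∣ C := (Nat.dvd_lcm_right a b).trans (Nat.dvd_lcm_left _ c)
  have hC : C ≠ 0 := Nat.lcm_ne_zero (Nat.lcm_ne_zero ha hb) (by omega)
  obtain ⟨A, B, hAB, hcop, haA, hbB⟩ := Nat.exists_coprime_mul_eq_gcd_dvd_gcd ha hb hC
  obtain ⟨u, v, hu, hv, huv, huA, huB, hvA, hvB⟩ := Nat.exists_coprime_modEq_swap hcop
    (left_ne_zero_of_mul (hAB ▸ hC)) (right_ne_zero_of_mul (hAB ▸ hC)) n
  have hua : u ≡ 1 [MOD a] := .of_modEq_gcd_of_modEq_gcd hcop (hAB ▸ haC)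
    ((huA.of_dvd (Nat.gcd_dvd_right a A)).trans (hn1.of_dvd haA))
    (huB.of_dvd (Nat.gcd_dvd_right a B))
  have hvb : v ≡ 1 [MOD b] := .of_modEq_gcd_of_modEq_gcd hcop (hAB ▸ hbC)
    (hvA.of_dvd (Nat.gcd_dvd_right b A))
    ((hvB.of_dvd (Nat.gcd_dvd_right b B)).trans (hn1.of_dvd hbB))
  have huvC : u * v ≡ n [MOD C] := by
    rw [← hAB, ← Nat.modEq_and_modEq_iff_modEq_mul hcop]
    exact ⟨by simpa using huA.mul hvA, by simpa using huB.mul hvB⟩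
  calc f n = f (u * v) :=
        (hPc.2 _ (Nat.mul_pos hu hv) (huvC.of_dvd (Nat.dvd_lcm_right _ c))).symm
    _ = f u * f v := hf.2 u v huv
    _ = f 1 * f 1 := by rw [hPa.2 u hu hua, hPb.2 v hv hvb]
    _ = f 1 := by rw [hf.1, mul_one]

theorem exists_forall_iff_dvd_of_gcd_closed {S : ℕ → Prop} (hS : ∃ m, 0 < m ∧ S m)
    (hdvd : ∀ {a b}, a ∣ b → S a → S b)
    (hgcd : ∀ {a b}, 0 < a → 0 < b → S a → S b → S (Nat.gcd a b)) :
    ∃ m₁, 0 < m₁ ∧ ∀ m, 0 < m → (S m ↔ m₁ ∣ m) := by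
  obtain ⟨hm₁, hS₁⟩ := Nat.find_spec hS
  refine ⟨Nat.find hS, hm₁, fun m hm => ⟨fun hSm => ?_, fun h => hdvd h hS₁⟩⟩
  have hle := Nat.find_min' hS ⟨Nat.gcd_pos_of_pos_left m hm₁, hgcd hm₁ hm hS₁ hSm⟩
  rw [← Nat.gcd_eq_left_iff_dvd]
  exact le_antisymm (Nat.le_of_dvd hm₁ (Nat.gcd_dvd_left _ m)) hle

theorem minimal_period_of_position_one_general
    (f : ℕ → ℂ) (hf : IsMult f) (htoe : IsToeplitz f) :
    ∃ m₁ : ℕ, 1 ≤ m₁ ∧ ∀ m : ℕ, 1 ≤ m → (1 ∈ PerSet f m ↔ m₁ ∣ m) :=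
  exists_forall_iff_dvd_of_gcd_closed (htoe 1 le_rfl) mem_perSet_of_dvd
    fun ha hb => one_mem_perSet_gcd hf htoe ha.ne' hb.ne'

theorem minimal_period_of_position_one
    (f : ℕ → ℂ) (hf : IsMult f) (hnz : ∃ n : ℕ, f n ≠ 0) (htoe : IsToeplitz f) :
    ∃ m₁ : ℕ, 1 ≤ m₁ ∧ ∀ m : ℕ, 1 ≤ m → (1 ∈ PerSet f m ↔ m₁ ∣ m) :=
  minimal_period_of_position_one_general f hf htoe
end
end

section
/- Let f : ℕ → ℂ be a nonzero multiplicative function that is M-periodic (f(n + M) = f(n) for all n ≥ 1). Then there exist a divisor t of M and a Dirichlet character θ of modulus t such that f(n) = θ(n) for all n with gcd(n, M) = 1, and moreover for every prime q and every ℓ ≥ 0 one has f(q^{ν_q(M/t)+ℓ}) = f(q^{ν_q(M/t)})·θ(q^ℓ). In particular f(q^{ν_q(M/t)+ℓ}) = 0 whenever q divides t and ℓ > 0. -/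
open scoped BigOperators Classical

noncomputable section

/-!
Periodicity lets `f` descend to a function `F` on `ZMod M`. Choosing a representative
of a unit `u` coprime to a representative of `c` gives `F (c * u) = F c * F u`, so `F` restricted
to the units is a Dirichlet character `χ` modulo `M`; `θ` is its primitive character, whose
modulus is the conductor `t`. If `F c ≠ 0`, cancelling `F c` in `F (c * u) = F c` for the units
`u ≡ 1` modulo `M / gcd(M, c)` shows that `χ` factors through that modulus, so `t` divides it.
For `c = q ^ (ν_q(M/t) + ℓ)` with `q ∣ t` and `ℓ > 0` this is impossible by comparing `ν_q`.
For `q ∤ t`, `q ^ (ν_q(M) + ℓ) = q ^ ν_q(M) * u` in `ZMod M` for a unit `u` lifting `q ^ ℓ`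
modulo the prime-to-`q` part of `M`, which `t` divides.
-/

lemma ZMod.natCast_mul_eq_of_modEq {M c d x y : ℕ} (h : M ∣ c * d) (hxy : x ≡ y [MOD d]) :
    ((c * x : ℕ) : ZMod M) = c * y := by
  rw [(ZMod.natCast_eq_natCast_iff _ _ _).mpr ((hxy.mul_left' c).of_dvd h), Nat.cast_mul]

lemma ZMod.exists_pos_coprime_natCast_eq {M : ℕ} [NeZero M] (u : (ZMod M)ˣ) {c : ℕ}
    (hc : c ≠ 0) : ∃ n : ℕ, 0 < n ∧ n.Coprime c ∧ (n : ZMod M) = u := by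
  have : NeZero (c * M) := ⟨mul_ne_zero hc (NeZero.ne M)⟩
  obtain ⟨v, rfl⟩ := ZMod.unitsMap_surjective (dvd_mul_left M c) u
  refine ⟨(v : ZMod (c * M)).val + c * M, by have := NeZero.pos (c * M); omega, ?_, ?_⟩
  · exact (Nat.coprime_add_self_left.mpr (ZMod.val_coe_unit_coprime v)).coprime_dvd_right
      (dvd_mul_right c M)
  · rw [ZMod.unitsMap_val, ZMod.cast_eq_val]
    simp

lemma Nat.factorization_div_apply {d n : ℕ} (h : d ∣ n) (p : ℕ) :
    (n / d).factorization p = n.factorization p - d.factorization p := by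
  rw [Nat.factorization_div h, Finsupp.tsub_apply]

lemma DirichletCharacter.primitiveCharacter_natCast {R : Type*} [CommMonoidWithZero R] {n : ℕ}
    (χ : DirichletCharacter R n) {a : ℕ} (ha : a.Coprime n) :
    χ.primitiveCharacter a = χ a := by
  simpa using χ.primitiveCharacter_apply_of_isCoprime (Nat.isCoprime_iff_coprime.mpr ha)

section Periodic

variable {α : Type*} {f : ℕ → α} {M : ℕ}

/-- Shifting by `M` keeps the argument in `n ≥ 1`, where `f` is periodic. -/
def zmodFun (f : ℕ → α) (M : ℕ) (x : ZMod M) : α := f (x.val + M)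

lemma apply_add_mul_of_periodic (hper : ∀ n : ℕ, 1 ≤ n → f (n + M) = f n) (k : ℕ) {n : ℕ}
    (hn : 1 ≤ n) : f (n + M * k) = f n := by
  induction k with
  | zero => simp
  | succ k ih => rw [mul_add_one, ← add_assoc, hper _ (by omega), ih]

lemma zmodFun_natCast [NeZero M] (hper : ∀ n : ℕ, 1 ≤ n → f (n + M) = f n) {n : ℕ}
    (hn : 1 ≤ n) : zmodFun f M n = f n := by
  have hsplit : n + M = (n % M + M) + M * (n / M) := by
    conv_lhs => rw [← Nat.mod_add_div n M]
    ring
  rw [zmodFun, ZMod.val_natCast, ← hper n hn, hsplit,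
    apply_add_mul_of_periodic hper _ (by have := NeZero.pos M; omega)]

end Periodic

section PeriodicMultiplicative

variable {f : ℕ → ℂ} {M : ℕ} [NeZero M]

lemma zmodFun_mul_unit (hf : IsMult f) (hper : ∀ n : ℕ, 1 ≤ n → f (n + M) = f n)
    (c : ZMod M) (u : (ZMod M)ˣ) : zmodFun f M (c * u) = zmodFun f M c * zmodFun f M u := by
  have hM := NeZero.pos M
  obtain ⟨n, hn, hcop, hnu⟩ := ZMod.exists_pos_coprime_natCast_eq u (c := c.val + M) (by omega)
  have hc : ((c.val + M : ℕ) : ZMod M) = c := by simp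
  rw [← hnu, ← hc, ← Nat.cast_mul, zmodFun_natCast hper (Nat.mul_pos (by omega) hn),
    zmodFun_natCast hper hn, zmodFun_natCast hper (by omega), hf.2 _ _ hcop.symm]

lemma exists_dirichletCharacter_eq_zmodFun (hf : IsMult f)
    (hper : ∀ n : ℕ, 1 ≤ n → f (n + M) = f n) :
    ∃ χ : DirichletCharacter ℂ M, ∀ u : (ZMod M)ˣ, χ u = zmodFun f M u := by
  let φ : (ZMod M)ˣ →* ℂ :=
    { toFun := fun u => zmodFun f M u
      map_one' := by
        rw [Units.val_one, ← Nat.cast_one, zmodFun_natCast hper le_rfl, hf.1]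
      map_mul' := fun u v => by rw [Units.val_mul, zmodFun_mul_unit hf hper] }
  exact ⟨MulChar.ofUnitHom φ.toHomUnits, fun u => MulChar.ofUnitHom_coe _ u⟩

variable {χ : DirichletCharacter ℂ M}

lemma factorsThrough_of_zmodFun_ne_zero (hf : IsMult f)
    (hper : ∀ n : ℕ, 1 ≤ n → f (n + M) = f n) (hχ : ∀ u : (ZMod M)ˣ, χ u = zmodFun f M u)
    {c d : ℕ} (hdM : d ∣ M) (hMcd : M ∣ c * d) (hc : zmodFun f M c ≠ 0) :
    χ.FactorsThrough d := by
  refine (DirichletCharacter.factorsThrough_iff_ker_unitsMap hdM).mpr fun u hu => ?_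
  have hu1 : (u : ZMod M).val ≡ 1 [MOD d] := by
    rwa [MonoidHom.mem_ker, Units.ext_iff, ZMod.unitsMap_val, ZMod.cast_eq_val, Units.val_one,
      ← Nat.cast_one, ZMod.natCast_eq_natCast_iff] at hu
  have hcu : (c : ZMod M) * u = c := by
    simpa using ZMod.natCast_mul_eq_of_modEq hMcd hu1
  have hFu : zmodFun f M u = 1 := by
    have := zmodFun_mul_unit hf hper c u
    rw [hcu] at this
    exact (mul_eq_left₀ hc).mp this.symm
  rw [MonoidHom.mem_ker, Units.ext_iff, MulChar.coe_toUnitHom, hχ, hFu, Units.val_one]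

lemma conductor_dvd_div_gcd (hf : IsMult f)
    (hper : ∀ n : ℕ, 1 ≤ n → f (n + M) = f n) (hχ : ∀ u : (ZMod M)ˣ, χ u = zmodFun f M u)
    {c : ℕ} (hc : 1 ≤ c) (hfc : f c ≠ 0) : χ.conductor ∣ M / M.gcd c := by
  refine χ.conductor_dvd_of_mem_conductorSet
    (factorsThrough_of_zmodFun_ne_zero hf hper hχ (Nat.div_dvd_of_dvd (M.gcd_dvd_left c)) ?_
      (by rwa [zmodFun_natCast hper hc]))
  calc M = M.gcd c * (M / M.gcd c) := (Nat.mul_div_cancel' (M.gcd_dvd_left c)).symm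
    _ ∣ c * (M / M.gcd c) := mul_dvd_mul_right (M.gcd_dvd_right c) _

lemma apply_eq_primitiveCharacter (hper : ∀ n : ℕ, 1 ≤ n → f (n + M) = f n)
    (hχ : ∀ u : (ZMod M)ˣ, χ u = zmodFun f M u) {n : ℕ} (hn : 1 ≤ n) (hnM : n.Coprime M) :
    f n = χ.primitiveCharacter n := by
  rw [χ.primitiveCharacter_natCast hnM, ← zmodFun_natCast hper hn,
    ← ZMod.coe_unitOfCoprime n hnM, hχ]

lemma apply_prime_pow_eq_zero (hf : IsMult f) (hper : ∀ n : ℕ, 1 ≤ n → f (n + M) = f n)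
    (hχ : ∀ u : (ZMod M)ˣ, χ u = zmodFun f M u) {q : ℕ} (hq : q.Prime) (hqt : q ∣ χ.conductor)
    {ℓ : ℕ} (hℓ : 0 < ℓ) : f (q ^ ((M / χ.conductor).factorization q + ℓ)) = 0 := by
  set k := (M / χ.conductor).factorization q + ℓ with hk
  by_contra hfk
  have hqk : q ^ k ≠ 0 := pow_ne_zero _ hq.ne_zero
  have hd0 : M / M.gcd (q ^ k) ≠ 0 :=
    (Nat.div_pos (Nat.gcd_le_left _ (NeZero.pos M)) (Nat.gcd_pos_of_pos_left _ (NeZero.pos M))).ne'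
  have hle := (Nat.factorization_le_iff_dvd χ.conductor_ne_zero hd0).mpr
    (conductor_dvd_div_gcd hf hper hχ (Nat.one_le_iff_ne_zero.mpr hqk) hfk) q
  rw [Nat.factorization_div_apply (M.gcd_dvd_left _), Nat.factorization_gcd (NeZero.ne M) hqk,
    Finsupp.inf_apply, Nat.factorization_pow_self hq] at hle
  have hqt' := hq.factorization_pos_of_dvd χ.conductor_ne_zero hqt
  have hνt := Nat.factorization_div_apply χ.conductor_dvd_level q
  omega

lemma apply_prime_pow_add (hf : IsMult f) (hper : ∀ n : ℕ, 1 ≤ n → f (n + M) = f n)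
    (hχ : ∀ u : (ZMod M)ˣ, χ u = zmodFun f M u) {q : ℕ} (hq : q.Prime) (hqt : ¬q ∣ χ.conductor)
    (ℓ : ℕ) : f (q ^ (M.factorization q + ℓ)) =
      f (q ^ M.factorization q) * χ.primitiveCharacter (q ^ ℓ : ℕ) := by
  set a := M.factorization q
  set m := ordCompl[q] M
  have hM : q ^ a * m = M := Nat.ordProj_mul_ordCompl_eq_self M q
  have htm : χ.conductor ∣ m :=
    ((hq.coprime_iff_not_dvd.mpr hqt).symm.pow_right a).dvd_of_dvd_mul_left
      (χ.conductor_dvd_level.trans (dvd_of_eq hM.symm))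
  obtain ⟨u, hu⟩ := ZMod.unitsMap_surjective (Nat.ordCompl_dvd M q)
    (ZMod.unitOfCoprime (q ^ ℓ) ((Nat.coprime_ordCompl hq (NeZero.ne M)).pow_left ℓ))
  have hum : (u : ZMod M).val ≡ q ^ ℓ [MOD m] := by
    have := congrArg Units.val hu
    rwa [ZMod.unitsMap_val, ZMod.cast_eq_val, ZMod.coe_unitOfCoprime,
      ZMod.natCast_eq_natCast_iff] at this
  have hsplit : ((q ^ (a + ℓ) : ℕ) : ZMod M) = (q ^ a : ℕ) * u := by
    rw [pow_add, ZMod.natCast_mul_eq_of_modEq (dvd_of_eq hM.symm) hum.symm,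
      ZMod.natCast_zmod_val]
  calc f (q ^ (a + ℓ)) = zmodFun f M (q ^ (a + ℓ) : ℕ) :=
        (zmodFun_natCast hper (Nat.one_le_pow _ _ hq.pos)).symm
    _ = zmodFun f M (q ^ a : ℕ) * χ u := by rw [hsplit, zmodFun_mul_unit hf hper, hχ]
    _ = f (q ^ a) * χ.primitiveCharacter (q ^ ℓ : ℕ) := by
      rw [zmodFun_natCast hper (Nat.one_le_pow _ _ hq.pos), ← ZMod.natCast_zmod_val (u : ZMod M),
        ← χ.primitiveCharacter_natCast (ZMod.val_coe_unit_coprime u),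
        (ZMod.natCast_eq_natCast_iff _ _ _).mpr (hum.of_dvd htm)]

end PeriodicMultiplicative

theorem periodic_multiplicative_structure_general
    (f : ℕ → ℂ) (hf : IsMult f)
    (M : ℕ) (hM : 1 ≤ M) (hper : ∀ n : ℕ, 1 ≤ n → f (n + M) = f n) :
    ∃ (t : ℕ) (θ : ℕ → ℂ), t ∣ M ∧ IsDirichletCharFn t θ ∧
      (∀ n : ℕ, 1 ≤ n → Nat.Coprime n M → f n = θ n) ∧
      (∀ q : ℕ, Nat.Prime q → ∀ ℓ : ℕ,
        f (q ^ ((M / t).factorization q + ℓ)) =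
          f (q ^ ((M / t).factorization q)) * θ (q ^ ℓ)) ∧
      (∀ q : ℕ, Nat.Prime q → q ∣ t → ∀ ℓ : ℕ, 0 < ℓ →
        f (q ^ ((M / t).factorization q + ℓ)) = 0) := by
  have : NeZero M := ⟨by omega⟩
  obtain ⟨χ, hχ⟩ := exists_dirichletCharacter_eq_zmodFun hf hper
  have hvanish : ∀ q : ℕ, q.Prime → q ∣ χ.conductor → ∀ ℓ : ℕ, 0 < ℓ →
      f (q ^ ((M / χ.conductor).factorization q + ℓ)) = 0 :=
    fun q hq hqt ℓ hℓ => apply_prime_pow_eq_zero hf hper hχ hq hqt hℓ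
  refine ⟨χ.conductor, fun n => χ.primitiveCharacter n, χ.conductor_dvd_level, ⟨_, fun _ => rfl⟩,
    fun n hn hnM => apply_eq_primitiveCharacter hper hχ hn hnM, fun q hq ℓ => ?_, hvanish⟩
  rcases Nat.eq_zero_or_pos ℓ with rfl | hℓ
  · simp
  by_cases hqt : q ∣ χ.conductor
  · have hnotunit : ¬IsUnit ((q ^ ℓ : ℕ) : ZMod χ.conductor) := by
      rw [ZMod.isUnit_iff_coprime]
      exact fun h => hq.coprime_iff_not_dvd.mp (h.coprime_dvd_left (dvd_pow_self q hℓ.ne')) hqt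
    dsimp only
    rw [hvanish q hq hqt ℓ hℓ, χ.primitiveCharacter.map_nonunit hnotunit, mul_zero]
  · rw [Nat.factorization_div_apply χ.conductor_dvd_level, Nat.factorization_eq_zero_of_not_dvd hqt,
      Nat.sub_zero]
    exact apply_prime_pow_add hf hper hχ hq hqt ℓ

theorem periodic_multiplicative_structure
    (f : ℕ → ℂ) (hf : IsMult f) (hnz : ∃ n : ℕ, f n ≠ 0)
    (M : ℕ) (hM : 1 ≤ M) (hper : ∀ n : ℕ, 1 ≤ n → f (n + M) = f n) :
    ∃ (t : ℕ) (θ : ℕ → ℂ), t ∣ M ∧ IsDirichletCharFn t θ ∧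
      (∀ n : ℕ, 1 ≤ n → Nat.Coprime n M → f n = θ n) ∧
      (∀ q : ℕ, Nat.Prime q → ∀ ℓ : ℕ,
        f (q ^ ((M / t).factorization q + ℓ)) =
          f (q ^ ((M / t).factorization q)) * θ (q ^ ℓ)) ∧
      (∀ q : ℕ, Nat.Prime q → q ∣ t → ∀ ℓ : ℕ, 0 < ℓ →
        f (q ^ ((M / t).factorization q + ℓ)) = 0) :=
  periodic_multiplicative_structure_general f hf M hM hper
end
end

section
/- Let θ be a Dirichlet character of modulus t, let q_1, …, q_u be distinct primes and b_1, …, b_u ≥ 1. Assume f : ℕ → ℂ is a multiplicative function such that f(n) = θ(n) for every n coprime to q_1⋯q_u, and f(q_i^{b_i+ℓ}) = f(q_i^{b_i})·θ(q_i^ℓ) for every i = 1, …, u and every ℓ ≥ 0. Then f is periodic with period q_1^{b_1}⋯q_u^{b_u}·t, i.e. f(n + q_1^{b_1}⋯q_u^{b_u}·t) = f(n) for all n ≥ 1. -/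
open scoped BigOperators Classical

noncomputable section

/-! With `Q = ∏ qᵢ ^ bᵢ`, the function `n ↦ f (gcd n Q) · θ (n / gcd n Q)` is multiplicative
because `θ` is completely multiplicative, and the hypotheses say precisely that it agrees with `f`
on prime powers; so the two coincide on `n ≥ 1`. As `gcd (n + Q t) Q = gcd n Q` and `θ` has
period `t`, this expression is visibly `Q t`-periodic. -/

def gcdTwist (f θ : ℕ → ℂ) (Q n : ℕ) : ℂ :=
  f (n.gcd Q) * θ (n / n.gcd Q)

theorem gcdTwist_add_mul {θ : ℕ → ℂ} {t : ℕ} (hθ : ∀ m k, θ (m + k * t) = θ m) (f : ℕ → ℂ)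
    (Q n : ℕ) : gcdTwist f θ Q (n + Q * t) = gcdTwist f θ Q n := by
  have hd : n.gcd Q ∣ Q := Nat.gcd_dvd_right n Q
  rw [gcdTwist, gcdTwist, Nat.gcd_add_mul_left_left, Nat.add_div_of_dvd_left (hd.mul_right t),
    ← Nat.div_mul_right_comm hd, hθ]

namespace IsMult

theorem eq_of_eq_on_prime_powers {f g : ℕ → ℂ} (hf : IsMult f) (hg : IsMult g)
    (h : ∀ p k : ℕ, p.Prime → 0 < k → f (p ^ k) = g (p ^ k)) {n : ℕ} (hn : n ≠ 0) :
    f n = g n := by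
  induction n using Nat.recOnPosPrimePosCoprime with
  | prime_pow p k hp hk => exact h p k hp hk
  | zero => exact absurd rfl hn
  | one => rw [hf.1, hg.1]
  | coprime a b ha hb hab iha ihb =>
    rw [hf.2 a b hab, hg.2 a b hab, iha (by omega), ihb (by omega)]

theorem gcdTwist {f θ : ℕ → ℂ} (hf : IsMult f) (hθ1 : θ 1 = 1)
    (hθ : ∀ m n, θ (m * n) = θ m * θ n) (Q : ℕ) : IsMult (gcdTwist f θ Q) := by
  refine ⟨by simp [_root_.gcdTwist, hf.1, hθ1], fun m n hmn => ?_⟩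
  have hgcd : (m * n).gcd Q = m.gcd Q * n.gcd Q := by
    rw [Nat.gcd_comm, Nat.Coprime.gcd_mul Q hmn, Nat.gcd_comm Q, Nat.gcd_comm Q]
  have hcop : Nat.Coprime (m.gcd Q) (n.gcd Q) :=
    hmn.of_dvd (Nat.gcd_dvd_left m Q) (Nat.gcd_dvd_left n Q)
  rw [_root_.gcdTwist, hgcd, hf.2 _ _ hcop,
    Nat.mul_div_mul_comm (Nat.gcd_dvd_left m Q) (Nat.gcd_dvd_left n Q), hθ]
  simp only [_root_.gcdTwist]
  ring

end IsMult

namespace IsDirichletCharFn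

variable {t : ℕ} {θ : ℕ → ℂ}

theorem map_one (hθ : IsDirichletCharFn t θ) : θ 1 = 1 := by
  obtain ⟨χ, hχ⟩ := hθ
  simp [hχ]

theorem map_mul (hθ : IsDirichletCharFn t θ) (m n : ℕ) : θ (m * n) = θ m * θ n := by
  obtain ⟨χ, hχ⟩ := hθ
  simp [hχ]

theorem add_mul_self (hθ : IsDirichletCharFn t θ) (m k : ℕ) : θ (m + k * t) = θ m := by
  obtain ⟨χ, hχ⟩ := hθ
  simp [hχ]

end IsDirichletCharFn

theorem gcd_prime_pow_prod_eq_one {u : ℕ} {q : Fin u → ℕ} (hq : ∀ i, (q i).Prime)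
    (b : Fin u → ℕ) {p : ℕ} (hp : p.Prime) (hpq : ∀ i, q i ≠ p) (k : ℕ) :
    (p ^ k).gcd (∏ i, q i ^ b i) = 1 :=
  Nat.Coprime.prod_right fun i _ =>
    (Nat.coprime_primes hp (hq i) |>.mpr (hpq i).symm).pow k (b i)

theorem gcd_pow_prod_eq_gcd_pow {u : ℕ} {q : Fin u → ℕ} (hq : ∀ i, (q i).Prime)
    (hqinj : Function.Injective q) (b : Fin u → ℕ) (i : Fin u) (k : ℕ) :
    (q i ^ k).gcd (∏ j, q j ^ b j) = (q i ^ k).gcd (q i ^ b i) := by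
  rw [← Finset.mul_prod_erase _ _ (Finset.mem_univ i)]
  refine Nat.Coprime.gcd_mul_right_cancel_right _ (Nat.Coprime.prod_left fun j hj => ?_)
  have hji : q j ≠ q i := hqinj.ne (Finset.ne_of_mem_erase hj)
  exact (Nat.coprime_primes (hq j) (hq i) |>.mpr hji).pow (b j) k

theorem apply_eq_gcdTwist {u : ℕ} {q : Fin u → ℕ} (hq : ∀ i, (q i).Prime)
    (hqinj : Function.Injective q) (b : Fin u → ℕ) {f θ : ℕ → ℂ} (hf : IsMult f)
    (hθ1 : θ 1 = 1) (hθ : ∀ m n, θ (m * n) = θ m * θ n)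
    (hfθ : ∀ n : ℕ, 1 ≤ n → (∀ i, ¬ q i ∣ n) → f n = θ n)
    (hfq : ∀ (i : Fin u) (ℓ : ℕ), f (q i ^ (b i + ℓ)) = f (q i ^ b i) * θ (q i ^ ℓ))
    (n : ℕ) (hn : n ≠ 0) :
    f n = gcdTwist f θ (∏ i, q i ^ b i) n := by
  refine hf.eq_of_eq_on_prime_powers (hf.gcdTwist hθ1 hθ _) (fun p k hp _ => ?_) hn
  rw [gcdTwist]
  rcases em (∃ i, q i = p) with ⟨i, rfl⟩ | hpq
  · rw [gcd_pow_prod_eq_gcd_pow hq hqinj b]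
    rcases le_total k (b i) with hk | hk
    · rw [Nat.gcd_eq_left (pow_dvd_pow _ hk), Nat.div_self (pow_pos (hq i).pos k), hθ1, mul_one]
    · obtain ⟨ℓ, rfl⟩ := Nat.exists_eq_add_of_le hk
      rw [Nat.gcd_eq_right (pow_dvd_pow _ hk), pow_add (q i) (b i) ℓ,
        Nat.mul_div_cancel_left _ (pow_pos (hq i).pos _), ← pow_add, hfq]
  · rw [gcd_prime_pow_prod_eq_one hq b hp (fun i h => hpq ⟨i, h⟩), hf.1, one_mul, Nat.div_one]
    refine hfθ _ (Nat.one_le_pow _ _ hp.pos) fun i hdvd => hpq ⟨i, ?_⟩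
    exact (Nat.prime_dvd_prime_iff_eq (hq i) hp).mp ((hq i).dvd_of_dvd_pow hdvd)

theorem periodic_of_character_modification_general
    (t : ℕ) (θ : ℕ → ℂ) (hθ : IsDirichletCharFn t θ)
    (u : ℕ) (q : Fin u → ℕ) (hq : ∀ i, Nat.Prime (q i)) (hqinj : Function.Injective q)
    (b : Fin u → ℕ)
    (f : ℕ → ℂ) (hf : IsMult f)
    (hfθ : ∀ n : ℕ, 1 ≤ n → (∀ i, ¬ q i ∣ n) → f n = θ n)
    (hfq : ∀ (i : Fin u) (ℓ : ℕ), f (q i ^ (b i + ℓ)) = f (q i ^ b i) * θ (q i ^ ℓ)) :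
    ∀ n : ℕ, 1 ≤ n → f (n + (∏ i, q i ^ b i) * t) = f n := by
  intro n hn
  have key := apply_eq_gcdTwist hq hqinj b hf hθ.map_one hθ.map_mul hfθ hfq
  rw [key _ (by omega), key n (by omega), gcdTwist_add_mul hθ.add_mul_self]

theorem periodic_of_character_modification
    (t : ℕ) (ht : 1 ≤ t) (θ : ℕ → ℂ) (hθ : IsDirichletCharFn t θ)
    (u : ℕ) (q : Fin u → ℕ) (hq : ∀ i, Nat.Prime (q i)) (hqinj : Function.Injective q)
    (b : Fin u → ℕ) (hb : ∀ i, 1 ≤ b i)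
    (f : ℕ → ℂ) (hf : IsMult f)
    (hfθ : ∀ n : ℕ, 1 ≤ n → (∀ i, ¬ q i ∣ n) → f n = θ n)
    (hfq : ∀ (i : Fin u) (ℓ : ℕ), f (q i ^ (b i + ℓ)) = f (q i ^ b i) * θ (q i ^ ℓ)) :
    ∀ n : ℕ, 1 ≤ n → f (n + (∏ i, q i ^ b i) * t) = f n :=
  periodic_of_character_modification_general t θ hθ u q hq hqinj b f hf hfθ hfq
end
end

section
/- Let f ∈ M be a nonzero Toeplitz function. If χ is a Dirichlet character and t ∈ ℝ are such that D(f, n ↦ χ(n)·n^{it}) < ∞, then t = 0. -/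
open scoped BigOperators Classical

noncomputable section

/-! If `1 ∈ Per_q(f)` then `f(p) = f(1) = 1` for every prime `p ≡ 1 (mod q)`, and also `χ(p) = 1`
when moreover `p ≡ 1 (mod m)`. So, with `N = mq`, the hypothesis `D(f, χ n^{it}) < ∞` forces
`∑_{p ≡ 1 (N)} (1 - cos (t log p)) / p < ∞`. For `t ≠ 0` this is impossible: by orthogonality of
characters and the Euler product, `φ(N) ∑_{p ≡ 1 (N)} p^{-s} = ∑_χ log L(χ, s) + O(1)` for
`Re s > 1`. As `σ → 1⁺` the real part of the right side tends to `+∞` at `s = σ`, because of the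
pole of `L(χ₀, s)`, but stays bounded at `s = σ + it`, where no `L(χ, s)` has a pole or a zero. -/

open Complex Filter Topology
open scoped LSeries.notation

lemma Complex.re_ofReal_cpow_of_pos {x : ℝ} (hx : 0 < x) (s : ℂ) :
    ((x : ℂ) ^ s).re = x ^ s.re * Real.cos (s.im * Real.log x) := by
  rw [cpow_def_of_ne_zero (ofReal_ne_zero.mpr hx.ne'), ← ofReal_log hx.le, exp_re, re_ofReal_mul,
    im_ofReal_mul, Real.rpow_def_of_pos hx, mul_comm s.im]

lemma Complex.norm_log_one_sub_add_self_le {z : ℂ} (hz : ‖z‖ ≤ 1 / 2) :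
    ‖log (1 - z) + z‖ ≤ ‖z‖ ^ 2 := by
  have h := norm_log_one_add_sub_self_le (z := -z) (by rw [norm_neg]; linarith)
  rw [norm_neg, ← sub_eq_add_neg, sub_neg_eq_add] at h
  have : (1 - ‖z‖)⁻¹ ≤ 2 := by rw [inv_le_comm₀ (by linarith) two_pos]; linarith
  calc ‖log (1 - z) + z‖ ≤ ‖z‖ ^ 2 * (1 - ‖z‖)⁻¹ / 2 := h
    _ ≤ ‖z‖ ^ 2 * 2 / 2 := by gcongr
    _ = ‖z‖ ^ 2 := by ring

namespace Nat.Primes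

lemma rpow_neg_le_inv (p : Nat.Primes) {σ : ℝ} (hσ : 1 ≤ σ) : (p : ℝ) ^ (-σ) ≤ (p : ℝ)⁻¹ := by
  rw [← Real.rpow_neg_one]
  exact Real.rpow_le_rpow_of_exponent_le (by exact_mod_cast p.prop.one_lt.le) (by linarith)

lemma summable_inv_sq : Summable fun p : Nat.Primes => ((p : ℝ) ^ 2)⁻¹ :=
  (Real.summable_nat_pow_inv.mpr one_lt_two).comp_injective Subtype.val_injective

lemma summable_mul_cpow_neg {a : Nat.Primes → ℂ} (ha : ∀ p, ‖a p‖ ≤ 1) {s : ℂ} (hs : 1 < s.re) :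
    Summable fun p : Nat.Primes => a p * (p : ℂ) ^ (-s) := by
  refine .of_norm_bounded (summable_rpow.mpr (neg_lt_neg hs)) fun p => ?_
  rw [norm_mul, norm_natCast_cpow_of_pos p.prop.pos, neg_re]
  exact mul_le_of_le_one_left (by positivity) (ha p)

lemma summable_indicator_cpow_neg (S : Set Nat.Primes) {s : ℂ} (hs : 1 < s.re) :
    Summable (S.indicator fun p : Nat.Primes => (p : ℂ) ^ (-s)) := by
  simpa using (summable_mul_cpow_neg (a := 1) (fun _ => norm_one.le) hs).indicator S

lemma re_tsum_indicator_cpow_neg_sub_le (S : Set Nat.Primes) {σ : ℝ} (hσ : 1 < σ) (t : ℝ)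
    (hB : Summable (S.indicator fun p : Nat.Primes => (1 - Real.cos (t * Real.log p)) / p)) :
    (∑' p, S.indicator (fun p : Nat.Primes => (p : ℂ) ^ (-(σ + (0 : ℝ) * I))) p).re
      - (∑' p, S.indicator (fun p : Nat.Primes => (p : ℂ) ^ (-(σ + t * I))) p).re
      ≤ ∑' p, S.indicator (fun p : Nat.Primes => (1 - Real.cos (t * Real.log p)) / p) p := by
  have hS (τ : ℝ) := summable_indicator_cpow_neg S (s := σ + τ * I) (by simpa using hσ)
  refine hasSum_le (fun p => ?_) ((hasSum_re (hS 0).hasSum).sub (hasSum_re (hS t).hasSum))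
    hB.hasSum
  by_cases hp : p ∈ S
  · have hre (τ : ℝ) :
        ((p : ℂ) ^ (-(σ + τ * I))).re = (p : ℝ) ^ (-σ) * Real.cos (τ * Real.log p) := by
      simp [← ofReal_natCast, re_ofReal_cpow_of_pos (Nat.cast_pos.mpr p.prop.pos)]
    have hcos : 0 ≤ 1 - Real.cos (t * Real.log p) := sub_nonneg.mpr (Real.cos_le_one _)
    simp only [Set.indicator_of_mem hp, hre, zero_mul, Real.cos_zero, div_eq_inv_mul]
    linarith [mul_le_mul_of_nonneg_right (p.rpow_neg_le_inv hσ.le) hcos]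
  · simp [hp]

end Nat.Primes

namespace DirichletCharacter

variable {N : ℕ}

/-- Taking logarithms in the Euler product, `log ‖L(χ, s)‖` is the real part of
`∑ₚ -log (1 - χ(p) p⁻ˢ)`, whose terms differ from `χ(p) p⁻ˢ` by `O(p⁻²)`. -/
lemma abs_re_tsum_prime_sub_log_norm_LSeries_le (χ : DirichletCharacter ℂ N) {s : ℂ}
    (hs : 1 < s.re) :
    |(∑' p : Nat.Primes, χ p * (p : ℂ) ^ (-s)).re - Real.log ‖L ↗χ s‖| ≤
      ∑' p : Nat.Primes, ((p : ℝ) ^ 2)⁻¹ := by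
  set w : Nat.Primes → ℂ := fun p => χ p * (p : ℂ) ^ (-s)
  have hw : Summable w := Nat.Primes.summable_mul_cpow_neg (fun p => χ.norm_le_one _) hs
  have hterm (p : Nat.Primes) : ‖w p + log (1 - w p)‖ ≤ ((p : ℝ) ^ 2)⁻¹ := by
    have hwp : ‖w p‖ ≤ (p : ℝ)⁻¹ := by
      rw [norm_mul, norm_natCast_cpow_of_pos p.prop.pos, neg_re]
      exact (mul_le_of_le_one_left (by positivity) (χ.norm_le_one _)).trans
        (p.rpow_neg_le_inv hs.le)
    have hp : (p : ℝ)⁻¹ ≤ 1 / 2 := by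
      rw [one_div]; exact inv_anti₀ two_pos (by exact_mod_cast p.prop.two_le)
    rw [add_comm, ← inv_pow]
    exact (norm_log_one_sub_add_self_le (hwp.trans hp)).trans (by gcongr)
  have hsum : Summable fun p => ‖w p + log (1 - w p)‖ :=
    Nat.Primes.summable_inv_sq.of_nonneg_of_le (fun _ => norm_nonneg _) hterm
  rw [← LSeries_eulerProduct_exp_log χ hs, norm_exp, Real.log_exp, ← sub_re,
    ← hw.tsum_sub hw.clog_one_sub.neg]
  simp_rw [sub_neg_eq_add]
  calc _ ≤ ‖∑' p, (w p + log (1 - w p))‖ := abs_re_le_norm _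
    _ ≤ ∑' p, ‖w p + log (1 - w p)‖ := norm_tsum_le_tsum_norm hsum
    _ ≤ _ := hsum.tsum_le_tsum hterm Nat.Primes.summable_inv_sq

variable [NeZero N]

lemma sum_tsum_prime_eq_totient_mul {s : ℂ} (hs : 1 < s.re) :
    ∑ χ : DirichletCharacter ℂ N, ∑' p : Nat.Primes, χ p * (p : ℂ) ^ (-s) =
      N.totient * ∑' p : Nat.Primes,
        {p : Nat.Primes | ((p : ℕ) : ZMod N) = 1}.indicator (fun p => (p : ℂ) ^ (-s)) p := by
  rw [← Summable.tsum_finsetSum fun χ _ =>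
      Nat.Primes.summable_mul_cpow_neg (fun p => χ.norm_le_one _) hs, ← tsum_mul_left]
  refine tsum_congr fun p => ?_
  rw [← Finset.sum_mul, sum_characters_eq, Set.indicator_apply]
  split_ifs <;> simp_all

lemma abs_totient_mul_re_tsum_indicator_sub_sum_log_norm_le {s : ℂ} (hs : 1 < s.re) :
    |N.totient * (∑' p : Nat.Primes,
        {p : Nat.Primes | ((p : ℕ) : ZMod N) = 1}.indicator (fun p => (p : ℂ) ^ (-s)) p).re
      - ∑ χ : DirichletCharacter ℂ N, Real.log ‖χ.LFunction s‖| ≤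
      N.totient * ∑' p : Nat.Primes, ((p : ℝ) ^ 2)⁻¹ := by
  rw [← re_ofReal_mul, ofReal_natCast, ← sum_tsum_prime_eq_totient_mul hs, re_sum,
    ← Finset.sum_sub_distrib]
  refine (Finset.abs_sum_le_sum_abs _ _).trans ?_
  refine (Finset.sum_le_card_nsmul _ _ (∑' p : Nat.Primes, ((p : ℝ) ^ 2)⁻¹) fun χ _ => ?_).trans_eq
    ?_
  · rw [χ.LFunction_eq_LSeries hs]
    exact χ.abs_re_tsum_prime_sub_log_norm_LSeries_le hs
  · rw [Finset.card_univ, ← Nat.card_eq_fintype_card, card_eq_totient_of_hasEnoughRootsOfUnity,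
      nsmul_eq_mul]

lemma continuousAt_log_norm_LFunction (χ : DirichletCharacter ℂ N) {τ : ℝ} (h : χ ≠ 1 ∨ τ ≠ 0) :
    ContinuousAt (fun σ : ℝ => Real.log ‖χ.LFunction (σ + τ * I)‖) 1 := by
  have hne : χ ≠ 1 ∨ (1 + τ * I : ℂ) ≠ 1 := h.imp_right fun hτ h1 => hτ (by simpa using h1)
  have hL : ContinuousAt χ.LFunction ((1 : ℝ) + τ * I) :=
    (χ.differentiableAt_LFunction _ (by push_cast; exact hne.symm)).continuousAt
  refine (ContinuousAt.comp (f := fun σ : ℝ => (σ : ℂ) + τ * I) hL (by fun_prop)).norm.log ?_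
  rw [norm_ne_zero_iff]
  exact χ.LFunction_ne_zero_of_one_le_re (by push_cast; exact hne) (by simp)

/-- `(s - 1) L(χ₀, s)` is continuous and nonzero at `s = 1`, and `-log (σ - 1) → ∞`. -/
lemma tendsto_log_norm_LFunctionTrivChar :
    Tendsto (fun σ : ℝ => Real.log ‖LFunctionTrivChar N σ‖) (𝓝[>] 1) atTop := by
  have hreg : ContinuousAt (fun σ : ℝ => Real.log ‖LFunctionTrivChar₁ N σ‖) 1 := by
    refine (((differentiable_LFunctionTrivChar₁ N).continuous.comp continuous_ofReal).norm
      |>.continuousAt).log ?_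
    exact norm_ne_zero_iff.mpr (by simpa using LFunctionTrivChar₁_apply_one_ne_zero N)
  have hpole : Tendsto (fun σ : ℝ => -Real.log (σ - 1)) (𝓝[>] 1) atTop := by
    refine tendsto_neg_atBot_atTop.comp (Real.tendsto_log_nhdsGT_zero.comp ?_)
    refine tendsto_nhdsWithin_iff.mpr ⟨?_, ?_⟩
    · exact tendsto_nhdsWithin_of_tendsto_nhds
        (by simpa using (continuous_sub_right (1 : ℝ)).tendsto 1)
    · filter_upwards [self_mem_nhdsWithin] with σ (hσ : 1 < σ)
      exact sub_pos.mpr hσ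
  refine (hpole.atTop_add (hreg.tendsto.mono_left nhdsWithin_le_nhds)).congr' ?_
  filter_upwards [self_mem_nhdsWithin] with σ (hσ : 1 < σ)
  have hσ' : (σ : ℂ) ≠ 1 := by exact_mod_cast hσ.ne'
  have hL : LFunctionTrivChar N σ ≠ 0 :=
    LFunction_ne_zero_of_one_le_re _ (.inr hσ') (by simpa using hσ.le)
  simp only [Function.update_of_ne hσ', norm_mul]
  rw [Real.log_mul (by simpa [sub_eq_zero] using hσ') (norm_ne_zero_iff.mpr hL)]
  rw [← ofReal_one, ← ofReal_sub, norm_real, Real.norm_of_nonneg (by linarith)]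
  ring

lemma tendsto_sum_log_norm_LFunction_sub {t : ℝ} (ht : t ≠ 0) :
    Tendsto (fun σ : ℝ => ∑ χ : DirichletCharacter ℂ N, Real.log ‖χ.LFunction (σ + (0 : ℝ) * I)‖
      - ∑ χ : DirichletCharacter ℂ N, Real.log ‖χ.LFunction (σ + t * I)‖) (𝓝[>] 1) atTop := by
  have hreg : Tendsto (fun σ : ℝ =>
      ∑ χ ∈ Finset.univ.erase (1 : DirichletCharacter ℂ N), Real.log ‖χ.LFunction (σ + (0 : ℝ) * I)‖
        - ∑ χ : DirichletCharacter ℂ N, Real.log ‖χ.LFunction (σ + t * I)‖) (𝓝 1) (𝓝 _) :=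
    (tendsto_finsetSum _ fun χ hχ =>
        (χ.continuousAt_log_norm_LFunction (.inl (Finset.ne_of_mem_erase hχ))).tendsto).sub
      (tendsto_finsetSum _ fun χ _ => (χ.continuousAt_log_norm_LFunction (.inr ht)).tendsto)
  refine ((tendsto_log_norm_LFunctionTrivChar (N := N)).atTop_add
    (hreg.mono_left nhdsWithin_le_nhds)).congr fun σ => ?_
  simp only [ofReal_zero, zero_mul, add_zero]
  rw [← Finset.add_sum_erase _ (fun χ : DirichletCharacter ℂ N => Real.log ‖χ.LFunction σ‖)
    (Finset.mem_univ 1)]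
  ring

end DirichletCharacter

open DirichletCharacter in
theorem Nat.Primes.not_summable_indicator_one_sub_cos_div {N : ℕ} [NeZero N] {t : ℝ}
    (ht : t ≠ 0) :
    ¬ Summable ({p : Nat.Primes | ((p : ℕ) : ZMod N) = 1}.indicator
      fun p : Nat.Primes => (1 - Real.cos (t * Real.log p)) / p) := by
  intro hB
  set B := ∑' p : Nat.Primes, {p : Nat.Primes | ((p : ℕ) : ZMod N) = 1}.indicator
      (fun p : Nat.Primes => (1 - Real.cos (t * Real.log p)) / p) p
  set C := (N.totient : ℝ) * ∑' p : Nat.Primes, ((p : ℝ) ^ 2)⁻¹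
  obtain ⟨σ, hlarge, hσ : 1 < σ⟩ :=
    ((tendsto_sum_log_norm_LFunction_sub (N := N) ht).eventually_gt_atTop
      (N.totient * B + 2 * C) |>.and self_mem_nhdsWithin).exists
  have h0 := abs_le.mp <| abs_totient_mul_re_tsum_indicator_sub_sum_log_norm_le (N := N)
    (s := σ + (0 : ℝ) * I) (by simpa using hσ)
  have ht' := abs_le.mp <| abs_totient_mul_re_tsum_indicator_sub_sum_log_norm_le (N := N)
    (s := σ + t * I) (by simpa using hσ)
  have hdiff := mul_le_mul_of_nonneg_left (re_tsum_indicator_cpow_neg_sub_le _ hσ t hB)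
    (Nat.cast_nonneg (α := ℝ) N.totient)
  linarith [h0.1, ht'.2]

theorem toeplitz_pretentious_t_eq_zero_general
    (f : ℕ → ℂ) (hf : IsMult f)
    (htoe : IsToeplitz f)
    (m : ℕ) (hm : 1 ≤ m) (χ : ℕ → ℂ) (hχ : IsDirichletCharFn m χ) (t : ℝ)
    (hpret : PretConv f (fun n : ℕ => χ n * (n : ℂ) ^ ((t : ℂ) * Complex.I))) :
    t = 0 := by
  obtain ⟨χ₀, hχ₀⟩ := hχ
  obtain ⟨q, hq, -, hper⟩ := htoe 1 le_rfl
  have : NeZero (m * q) := ⟨by positivity⟩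
  by_contra ht
  refine Nat.Primes.not_summable_indicator_one_sub_cos_div (N := m * q) ht <|
    (hpret.indicator _).congr fun _ => congrFun (Set.indicator_congr fun p hp => ?_) _
  replace hp : (p : ℕ) ≡ 1 [MOD m * q] := by
    rwa [← ZMod.natCast_eq_natCast_iff, Nat.cast_one]
  have hfp : f p = 1 := (hper p p.prop.one_lt.le (hp.of_mul_left m)).trans hf.1
  have hχp : χ p = 1 := by
    rw [hχ₀, (ZMod.natCast_eq_natCast_iff _ 1 m).mpr (hp.of_mul_right q), Nat.cast_one, map_one]
  have hre : ((p : ℂ) ^ ((t : ℂ) * I)).re = Real.cos (t * Real.log p) := by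
    simp [← ofReal_natCast, re_ofReal_cpow_of_pos (Nat.cast_pos.mpr p.prop.pos)]
  simp only [hfp, hχp, one_mul, conj_re, hre, one_div_mul_eq_div]

theorem toeplitz_pretentious_t_eq_zero
    (f : ℕ → ℂ) (hf : IsMult f) (hb : ∀ n : ℕ, ‖f n‖ ≤ 1)
    (hnz : ∃ n : ℕ, f n ≠ 0) (htoe : IsToeplitz f)
    (m : ℕ) (hm : 1 ≤ m) (χ : ℕ → ℂ) (hχ : IsDirichletCharFn m χ) (t : ℝ)
    (hpret : PretConv f (fun n : ℕ => χ n * (n : ℂ) ^ ((t : ℂ) * Complex.I))) :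
    t = 0 :=
  toeplitz_pretentious_t_eq_zero_general f hf htoe m hm χ hχ t hpret
end
end

section
/- Let f ∈ M take only finitely many values (the range of f is a finite set) and let χ be a Dirichlet character with D(f, χ) < ∞. Then the limit lim_{N→∞} ∑_{p prime, p ≤ N} (1/p)·(1 − f(p)·conj(χ(p))) exists in ℂ if and only if ∑_{p prime, f(p) ≠ χ(p)} 1/p < ∞. -/
open scoped BigOperators Classical

noncomputable section

/-!
Since `f` and `χ` take finitely many values and `‖f p · conj (χ p)‖ ≤ 1`, the nonnegative number
`1 - Re (f p · conj (χ p))` takes finitely many values, so its nonzero values are at least some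
`δ > 0`; it is nonzero whenever `f p ≠ χ p`. So `𝔻(f, χ) < ∞` already forces both sides of the
equivalence: the sum of `1/p` over `f p ≠ χ p` is at most `δ⁻¹ 𝔻(f, χ)²`, and the complex series
converges absolutely because `‖1 - z‖ ≤ 2 ≤ (2/δ) (1 - Re z)` for `z ≠ 1` in the closed unit disc.
-/

open Set Filter Topology

namespace Complex

lemma re_lt_one_of_norm_le_one {z : ℂ} (hz : ‖z‖ ≤ 1) (h1 : z ≠ 1) : z.re < 1 := by
  refine (re_le_norm z |>.trans hz).lt_of_ne fun hre => h1 ?_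
  have him : z.im = 0 := abs_re_eq_norm.mp <| by
    rw [hre, abs_one]; exact le_antisymm (hre ▸ re_le_norm z) hz
  exact ext hre him

lemma exists_pos_le_one_sub_re_of_finite {S : Set ℂ} (hS : S.Finite) (h1 : ∀ z ∈ S, ‖z‖ ≤ 1) :
    ∃ δ > 0, ∀ z ∈ S, z ≠ 1 → δ ≤ 1 - z.re := by
  have : ∀ᶠ δ in 𝓝[>] (0 : ℝ), ∀ z ∈ S, z ≠ 1 → δ ≤ 1 - z.re :=
    hS.eventually_all.mpr fun z hz => by
      by_cases hz1 : z = 1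
      · exact .of_forall fun _ h => absurd hz1 h
      · have hpos : 0 < 1 - z.re := sub_pos.mpr (re_lt_one_of_norm_le_one (h1 z hz) hz1)
        filter_upwards [Ioo_mem_nhdsGT hpos] with δ hδ using fun _ => hδ.2.le
  exact (this.and self_mem_nhdsWithin).exists.imp fun δ h => ⟨h.2, h.1⟩

lemma eq_of_mul_conj_eq_one {z c : ℂ} (hz : ‖z‖ ≤ 1) (hc : ‖c‖ ≤ 1)
    (h : z * (starRingEnd ℂ) c = 1) : z = c := by
  have hnorm : ‖z‖ * ‖c‖ = 1 := by simpa using congrArg norm h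
  have hc1 : ‖c‖ = 1 := le_antisymm hc (by nlinarith [norm_nonneg c])
  have hcc : c * (starRingEnd ℂ) c = 1 := by rw [mul_conj', hc1]; simp
  calc z = z * (starRingEnd ℂ) c * c := by rw [mul_assoc, mul_comm _ c, hcc, mul_one]
    _ = c := by rw [h, one_mul]

end Complex

lemma MulChar.finite_range {R R' : Type*} [CommMonoid R] [CommMonoidWithZero R'] [Finite Rˣ]
    (χ : MulChar R R') : (range χ).Finite := by
  refine ((Set.finite_range fun u : Rˣ => χ u).insert 0).subset ?_
  rintro _ ⟨a, rfl⟩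
  by_cases ha : IsUnit a
  · exact mem_insert_of_mem _ ⟨ha.unit, rfl⟩
  · exact mem_insert_iff.mpr (Or.inl (χ.map_nonunit ha))

lemma IsDirichletCharFn.norm_le_one {m : ℕ} {χ : ℕ → ℂ} (hχ : IsDirichletCharFn m χ) (n : ℕ) :
    ‖χ n‖ ≤ 1 := by
  obtain ⟨χ₀, hχ₀⟩ := hχ
  exact hχ₀ n ▸ χ₀.norm_le_one _

lemma IsDirichletCharFn.finite_range {m : ℕ} {χ : ℕ → ℂ} (hχ : IsDirichletCharFn m χ) :
    (range χ).Finite := by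
  obtain ⟨χ₀, hχ₀⟩ := hχ
  refine χ₀.finite_range.subset ?_
  rintro _ ⟨n, rfl⟩
  exact ⟨n, (hχ₀ n).symm⟩

section FiniteRange

variable {ι : Type*} {a : ι → ℝ} {w : ι → ℂ}

lemma summable_subtype_ne_one_of_finite_range (ha : ∀ i, 0 ≤ a i) (hw : ∀ i, ‖w i‖ ≤ 1)
    (hfin : (range w).Finite) (hs : Summable fun i => a i * (1 - (w i).re)) :
    Summable fun i : {i // w i ≠ 1} => a i := by
  obtain ⟨δ, hδ, hgap⟩ :=
    Complex.exists_pos_le_one_sub_re_of_finite hfin (by rintro _ ⟨i, rfl⟩; exact hw i)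
  refine .of_nonneg_of_le (fun i => ha i) (fun i => ?_) ((hs.mul_left δ⁻¹).subtype _)
  change a i ≤ δ⁻¹ * (a i * (1 - (w i).re))
  rw [le_inv_mul_iff₀ hδ, mul_comm δ]
  exact mul_le_mul_of_nonneg_left (hgap _ ⟨i, rfl⟩ i.2) (ha i)

lemma summable_mul_one_sub_of_finite_range (ha : ∀ i, 0 ≤ a i) (hw : ∀ i, ‖w i‖ ≤ 1)
    (hfin : (range w).Finite) (hs : Summable fun i => a i * (1 - (w i).re)) :
    Summable fun i => (a i : ℂ) * (1 - w i) := by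
  obtain ⟨δ, hδ, hgap⟩ :=
    Complex.exists_pos_le_one_sub_re_of_finite hfin (by rintro _ ⟨i, rfl⟩; exact hw i)
  refine .of_norm_bounded (hs.mul_left (2 / δ)) fun i => ?_
  rw [norm_mul, Complex.norm_real, Real.norm_of_nonneg (ha i), mul_left_comm]
  refine mul_le_mul_of_nonneg_left ?_ (ha i)
  by_cases h1 : w i = 1
  · simp [h1]
  calc ‖1 - w i‖ ≤ 2 := (norm_sub_le _ _).trans (by rw [norm_one]; linarith [hw i])
    _ = 2 / δ * δ := (div_mul_cancel₀ 2 hδ.ne').symm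
    _ ≤ 2 / δ * (1 - (w i).re) := by gcongr; exact hgap _ ⟨i, rfl⟩ h1

end FiniteRange

lemma Nat.Primes.tendsto_sum_filter_prime_Icc {E : Type*} [AddCommMonoid E] [TopologicalSpace E]
    {F : ℕ → E} {s : E} (h : HasSum (fun p : Nat.Primes => F p) s) :
    Tendsto (fun N => ∑ p ∈ (Finset.Icc 1 N).filter Nat.Prime, F p) atTop (𝓝 s) := by
  have h' : HasSum ({p | p.Prime}.indicator F) s := hasSum_subtype_iff_indicator.mp h
  refine (h'.tendsto_sum_nat.comp (tendsto_add_atTop_nat 1)).congr fun N => ?_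
  rw [Function.comp_apply, Finset.sum_indicator_eq_sum_filter]
  congr 1
  ext p
  simp only [Finset.mem_filter, Finset.mem_range, Finset.mem_Icc, mem_ofPred_eq]
  exact ⟨fun h => ⟨⟨h.2.pos, by omega⟩, h.2⟩, fun h => ⟨by omega, h.2⟩⟩

theorem series_converges_iff_summable_of_finite_range_general
    (f : ℕ → ℂ) (hb : ∀ n : ℕ, ‖f n‖ ≤ 1)
    (hfin : (Set.range f).Finite)
    (m : ℕ) (χ : ℕ → ℂ) (hχ : IsDirichletCharFn m χ)
    (hpret : PretConv f χ) :
    (∃ L : ℂ, Filter.Tendsto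
        (fun N : ℕ => ∑ p ∈ (Finset.Icc 1 N).filter Nat.Prime,
          (1 : ℂ) / p * (1 - f p * (starRingEnd ℂ) (χ p)))
        Filter.atTop (nhds L)) ↔
      Summable (fun p : {p : ℕ // Nat.Prime p ∧ f p ≠ χ p} => (1 : ℝ) / ((p : ℕ) : ℝ)) := by
  let w : Nat.Primes → ℂ := fun p => f p * (starRingEnd ℂ) (χ p)
  have hw : ∀ p, ‖w p‖ ≤ 1 := fun p => by
    simpa [w] using mul_le_one₀ (hb p) (norm_nonneg _) (hχ.norm_le_one p)
  have hwfin : (range w).Finite := by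
    refine (hfin.image2 (fun z c => z * (starRingEnd ℂ) c) hχ.finite_range).subset ?_
    rintro _ ⟨p, rfl⟩
    exact mem_image2_of_mem (mem_range_self _) (mem_range_self _)
  have ha : ∀ p : Nat.Primes, 0 ≤ (1 : ℝ) / (p : ℕ) := fun p => by positivity
  have hsum : Summable fun p : Nat.Primes => (1 : ℂ) / (p : ℕ) * (1 - w p) := by
    convert summable_mul_one_sub_of_finite_range ha hw hwfin hpret using 2
    push_cast
    rfl
  have hne : Summable fun p : {p : Nat.Primes // w p ≠ 1} => (1 : ℝ) / (p : ℕ) :=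
    summable_subtype_ne_one_of_finite_range ha hw hwfin hpret
  refine ⟨fun _ => ?_, fun _ => ⟨_, Nat.Primes.tendsto_sum_filter_prime_Icc
    (F := fun p => (1 : ℂ) / p * (1 - f p * (starRingEnd ℂ) (χ p))) hsum.hasSum⟩⟩
  let i : {p : ℕ // p.Prime ∧ f p ≠ χ p} → {p : Nat.Primes // w p ≠ 1} := fun p =>
    ⟨⟨p, p.2.1⟩, fun h => p.2.2 (Complex.eq_of_mul_conj_eq_one (hb p) (hχ.norm_le_one p) h)⟩
  have hi : Function.Injective i := fun p q h => Subtype.ext (congrArg (fun r => r.1.1) h)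
  exact (hne.comp_injective hi :)

theorem series_converges_iff_summable_of_finite_range
    (f : ℕ → ℂ) (hf : IsMult f) (hb : ∀ n : ℕ, ‖f n‖ ≤ 1)
    (hfin : (Set.range f).Finite)
    (m : ℕ) (hm : 1 ≤ m) (χ : ℕ → ℂ) (hχ : IsDirichletCharFn m χ)
    (hpret : PretConv f χ) :
    (∃ L : ℂ, Filter.Tendsto
        (fun N : ℕ => ∑ p ∈ (Finset.Icc 1 N).filter Nat.Prime,
          (1 : ℂ) / p * (1 - f p * (starRingEnd ℂ) (χ p)))
        Filter.atTop (nhds L)) ↔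
      Summable (fun p : {p : ℕ // Nat.Prime p ∧ f p ≠ χ p} => (1 : ℝ) / ((p : ℕ) : ℝ)) :=
  series_converges_iff_summable_of_finite_range_general f hb hfin m χ hχ hpret
end
end

section
/- Let f ∈ M take only finitely many values (the range of f is a finite set) and let t ∈ ℝ be such that D(f, n ↦ n^{it}) < ∞. Then t = 0. -/
open scoped BigOperators Classical

noncomputable section

/-!
If infinitely many primes share the value `v = f p`, then every power `v ^ k = f (p₁ ⋯ pₖ)` lies
in the finite range of `f`, so `v = 0` or `v ^ N = 1` with `N = (#range f)!`. At such primes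
`1 - Re p^{iNt} ≤ (N² + 2) (1 - Re (f p · p^{-it}))`, hence `D(1, n^{iNt}) < ∞`.
But `D(1, n^{iτ}) = ∞` for `τ ≠ 0`: by the Euler product, `Re ∑ₚ p^{-σ+iτ} ≤ log |ζ(σ - iτ)| + O(1)`
stays bounded as `σ → 1⁺` because `ζ` is continuous on `Re s = 1` away from `s = 1`, whereas
`∑ₚ p^{-σ} → ∞`; the difference of the two sums is at most `D(1, n^{iτ})²`.
-/

open Complex ComplexConjugate Filter Set Topology

lemma norm_one_sub_pow_le {R : Type*} [SeminormedRing R] [NormOneClass R] {u : R}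
    (hu : ‖u‖ ≤ 1) (n : ℕ) : ‖1 - u ^ n‖ ≤ n * ‖1 - u‖ := by
  induction n with
  | zero => simp
  | succ n ih =>
    calc ‖1 - u ^ (n + 1)‖ = ‖(1 - u ^ n) + u ^ n * (1 - u)‖ := by noncomm_ring
      _ ≤ ‖1 - u ^ n‖ + ‖u‖ ^ n * ‖1 - u‖ :=
        (norm_add_le _ _).trans (by grw [norm_mul_le, norm_pow_le])
      _ ≤ n * ‖1 - u‖ + 1 * ‖1 - u‖ := by grw [ih, pow_le_one₀ (norm_nonneg u) hu]
      _ = (n + 1 : ℕ) * ‖1 - u‖ := by push_cast; ring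

namespace Complex

lemma sq_norm_one_sub_of_norm_eq_one {u : ℂ} (hu : ‖u‖ = 1) : ‖1 - u‖ ^ 2 = 2 * (1 - u.re) := by
  have h : u.re * u.re + u.im * u.im = 1 := by rw [← normSq_apply, ← Complex.sq_norm, hu, one_pow]
  rw [Complex.sq_norm, normSq_apply]
  simp only [sub_re, one_re, sub_im, one_im]
  linarith

lemma one_sub_re_pow_le {u : ℂ} (hu : ‖u‖ = 1) (n : ℕ) :
    1 - (u ^ n).re ≤ n ^ 2 * (1 - u.re) := by
  have h := pow_le_pow_left₀ (norm_nonneg _) (norm_one_sub_pow_le hu.le n) 2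
  rw [mul_pow, sq_norm_one_sub_of_norm_eq_one hu,
    sq_norm_one_sub_of_norm_eq_one (by rw [norm_pow, hu, one_pow])] at h
  linarith

lemma one_sub_re_pow_le_mul_one_sub_re_mul_conj {z w : ℂ} {N : ℕ} (hN : N ≠ 0)
    (hz : z = 0 ∨ z ^ N = 1) (hw : ‖w‖ = 1) :
    1 - (w ^ N).re ≤ (N ^ 2 + 2) * (1 - (z * conj w).re) := by
  rcases hz with rfl | hz
  · have : -1 ≤ (w ^ N).re :=
      neg_le_of_abs_le ((abs_re_le_norm _).trans_eq (by rw [norm_pow, hw, one_pow]))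
    simp only [zero_mul, zero_re, sub_zero, mul_one]
    nlinarith
  · have hz1 : ‖z‖ = 1 :=
      (pow_eq_one_iff_of_nonneg (norm_nonneg z) hN).1 (by rw [← norm_pow, hz, norm_one])
    have hu : ‖z * conj w‖ = 1 := by rw [norm_mul, norm_conj, hz1, hw, one_mul]
    have hre : 0 ≤ 1 - (z * conj w).re := by linarith [re_le_norm (z * conj w)]
    have h := one_sub_re_pow_le hu N
    rw [mul_pow, hz, one_mul, ← map_pow, conj_re] at h
    nlinarith

lemma re_le_re_neg_log_one_sub_add {z : ℂ} (hz : z ≠ 1) :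
    z.re ≤ (-log (1 - z)).re + ‖z‖ ^ 2 / 2 := by
  have h := Real.log_le_sub_one_of_pos (pow_pos (norm_pos_iff.2 (sub_ne_zero.2 hz.symm)) 2)
  rw [Real.log_pow, Complex.sq_norm, normSq_apply] at h
  rw [neg_re, log_re, Complex.sq_norm, normSq_apply]
  simp only [sub_re, one_re, sub_im, one_im] at h
  push_cast at h
  nlinarith

end Complex

lemma Real.rpow_neg_le_inv {x σ : ℝ} (hx : 1 ≤ x) (hσ : 1 ≤ σ) : x ^ (-σ) ≤ x⁻¹ := by
  simpa [Real.rpow_neg_one] using Real.rpow_le_rpow_of_exponent_le hx (neg_le_neg hσ)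

lemma exists_forall_norm_riemannZeta_le {t : ℝ} (ht : t ≠ 0) :
    ∃ B, ∀ σ ∈ Icc (1 : ℝ) 2, ‖riemannZeta (σ + t * I)‖ ≤ B := by
  refine isCompact_Icc.exists_bound_of_continuousOn fun σ _ => ?_
  have hs : (σ : ℂ) + t * I ≠ 1 := fun h => ht (by simpa using congrArg im h)
  exact ((differentiableAt_riemannZeta hs).continuousAt.comp
    (f := fun σ : ℝ => (σ : ℂ) + t * I) (by fun_prop)).continuousWithinAt

namespace Nat.Primes

lemma exists_lt_tsum_rpow_neg (L : ℝ) :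
    ∃ σ ∈ Ioc (1 : ℝ) 2, L < ∑' p : Nat.Primes, (p : ℝ) ^ (-σ) := by
  by_contra! h
  refine Nat.Primes.not_summable_one_div
    (summable_of_sum_le (c := L) (fun p => by positivity) fun F => ?_)
  have hlim : Tendsto (fun σ : ℝ => ∑ p ∈ F, (p : ℝ) ^ (-σ)) (𝓝[>] 1)
      (𝓝 (∑ p ∈ F, 1 / (p : ℝ))) := by
    have hcont : Continuous fun σ : ℝ => ∑ p ∈ F, (p : ℝ) ^ (-σ) :=
      continuous_finsetSum F fun p _ =>
        (Real.continuous_const_rpow (by exact_mod_cast p.prop.ne_zero)).comp continuous_neg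
    simpa [Real.rpow_neg_one] using (hcont.tendsto 1).mono_left nhdsWithin_le_nhds
  refine le_of_tendsto hlim ?_
  filter_upwards [Ioc_mem_nhdsGT one_lt_two] with σ hσ
  exact (Summable.sum_le_tsum F (fun p _ => by positivity)
    (Nat.Primes.summable_rpow.2 (by linarith [hσ.1]))).trans (h σ hσ)

lemma norm_cpow_neg (p : Nat.Primes) (s : ℂ) : ‖(p : ℂ) ^ (-s)‖ = (p : ℝ) ^ (-s.re) := by
  simp [norm_natCast_cpow_of_pos p.prop.pos]

lemma summable_cpow_neg {s : ℂ} (hs : 1 < s.re) :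
    Summable fun p : Nat.Primes => (p : ℂ) ^ (-s) :=
  Summable.of_norm (by simpa only [norm_cpow_neg] using summable_rpow.2 (neg_lt_neg hs))

lemma norm_cpow_ofReal_mul_I (p : Nat.Primes) (t : ℝ) : ‖(p : ℂ) ^ ((t : ℂ) * I)‖ = 1 := by
  simp [norm_natCast_cpow_of_pos p.prop.pos]

lemma tsum_re_cpow_neg_le {s : ℂ} (hs : 1 < s.re) :
    ∑' p : Nat.Primes, ((p : ℂ) ^ (-s)).re
      ≤ Real.log ‖riemannZeta s‖ + ∑' p : Nat.Primes, ((p : ℝ) ^ 2)⁻¹ := by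
  have hlog : Summable fun p : Nat.Primes => -Complex.log (1 - (p : ℂ) ^ (-s)) :=
    (summable_cpow_neg hs).clog_one_sub.neg
  have hsq : Summable fun p : Nat.Primes => ((p : ℝ) ^ 2)⁻¹ :=
    (Real.summable_nat_pow_inv.2 one_lt_two).subtype _
  have hle_inv (p : Nat.Primes) : ‖(p : ℂ) ^ (-s)‖ ≤ (p : ℝ)⁻¹ := by
    rw [norm_cpow_neg]
    exact Real.rpow_neg_le_inv (by exact_mod_cast p.prop.one_le) hs.le
  have hterm (p : Nat.Primes) :
      ((p : ℂ) ^ (-s)).re ≤ (-Complex.log (1 - (p : ℂ) ^ (-s))).re + ((p : ℝ) ^ 2)⁻¹ := by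
    have hlt : ‖(p : ℂ) ^ (-s)‖ < 1 :=
      (hle_inv p).trans_lt (inv_lt_one_of_one_lt₀ (by exact_mod_cast p.prop.one_lt))
    have hsq_le : ‖(p : ℂ) ^ (-s)‖ ^ 2 ≤ ((p : ℝ) ^ 2)⁻¹ := by
      rw [← inv_pow]; gcongr; exact hle_inv p
    have := re_le_re_neg_log_one_sub_add (z := (p : ℂ) ^ (-s))
      (ne_of_apply_ne norm (by rw [norm_one]; exact hlt.ne))
    linarith [sq_nonneg ‖(p : ℂ) ^ (-s)‖]
  rw [← riemannZeta_eulerProduct_exp_log hs, norm_exp, Real.log_exp, re_tsum hlog,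
    ← (hasSum_re hlog.hasSum).summable.tsum_add hsq]
  exact Summable.tsum_le_tsum hterm (hasSum_re (summable_cpow_neg hs).hasSum).summable
    ((hasSum_re hlog.hasSum).summable.add hsq)

lemma not_summable_one_div_mul_one_sub_re_cpow {t : ℝ} (ht : t ≠ 0) :
    ¬ Summable fun p : Nat.Primes => 1 / (p : ℝ) * (1 - ((p : ℂ) ^ ((t : ℂ) * I)).re) := by
  intro hC
  obtain ⟨B, hB⟩ := exists_forall_norm_riemannZeta_le (neg_ne_zero.2 ht)
  obtain ⟨σ, hσ, hlt⟩ := exists_lt_tsum_rpow_neg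
    ((∑' p : Nat.Primes, 1 / (p : ℝ) * (1 - ((p : ℂ) ^ ((t : ℂ) * I)).re)) + Real.log B
      + ∑' p : Nat.Primes, ((p : ℝ) ^ 2)⁻¹)
  set s : ℂ := σ + ((-t : ℝ) : ℂ) * I
  have hs : 1 < s.re := by simpa [s] using hσ.1
  have hre (p : Nat.Primes) :
      ((p : ℂ) ^ (-s)).re = (p : ℝ) ^ (-σ) * ((p : ℂ) ^ ((t : ℂ) * I)).re := by
    have : -s = ((-σ : ℝ) : ℂ) + (t : ℂ) * I := by simp [s]; ring
    rw [this, cpow_add _ _ (by exact_mod_cast p.prop.ne_zero), ← ofReal_natCast,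
      ← ofReal_cpow (Nat.cast_nonneg _), re_ofReal_mul]
  have hsplit : ∑' p : Nat.Primes, (p : ℝ) ^ (-σ)
      ≤ ∑' p : Nat.Primes, 1 / (p : ℝ) * (1 - ((p : ℂ) ^ ((t : ℂ) * I)).re)
        + ∑' p : Nat.Primes, ((p : ℂ) ^ (-s)).re := by
    have hsum_re := (hasSum_re (summable_cpow_neg hs).hasSum).summable
    rw [← hC.tsum_add hsum_re]
    refine Summable.tsum_le_tsum (fun p => ?_) (summable_rpow.2 (neg_lt_neg hσ.1))
      (hC.add hsum_re)
    have hle_inv :=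
      Real.rpow_neg_le_inv (x := (p : ℝ)) (by exact_mod_cast p.prop.one_le) hσ.1.le
    have hle_one := (re_le_norm _).trans (norm_cpow_ofReal_mul_I p t).le
    rw [hre, one_div]
    nlinarith
  have hzeta : Real.log ‖riemannZeta s‖ ≤ Real.log B :=
    Real.log_le_log (norm_pos_iff.2 (riemannZeta_ne_zero_of_one_lt_re hs))
      (hB σ (Ioc_subset_Icc_self hσ))
  linarith [tsum_re_cpow_neg_le hs]

end Nat.Primes

lemma eq_zero_of_pretConv_one_cpow_mul_I {t : ℝ}
    (h : PretConv (fun _ => 1) fun n : ℕ => (n : ℂ) ^ ((t : ℂ) * I)) : t = 0 := by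
  by_contra ht
  exact Nat.Primes.not_summable_one_div_mul_one_sub_re_cpow ht (by simpa [PretConv] using h)

lemma PretConv.one_of_eventually_eq_zero_or_pow_eq_one {f : ℕ → ℂ} {t : ℝ} {N : ℕ} (hN : N ≠ 0)
    (h : PretConv f fun n : ℕ => (n : ℂ) ^ ((t : ℂ) * I))
    (hf : ∀ᶠ p : Nat.Primes in cofinite, f p = 0 ∨ f p ^ N = 1) :
    PretConv (fun _ => 1) fun n : ℕ => (n : ℂ) ^ (((N * t : ℝ) : ℂ) * I) := by
  refine (Summable.mul_left ((N : ℝ) ^ 2 + 2) h).of_norm_bounded_eventually ?_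
  filter_upwards [hf] with p hp
  have hpow : (p : ℂ) ^ (((N * t : ℝ) : ℂ) * I) = ((p : ℂ) ^ ((t : ℂ) * I)) ^ N := by
    rw [← cpow_nat_mul]; push_cast; ring_nf
  have key := one_sub_re_pow_le_mul_one_sub_re_mul_conj hN hp
    (Nat.Primes.norm_cpow_ofReal_mul_I p t)
  have hle_one := (re_le_norm _).trans (Nat.Primes.norm_cpow_ofReal_mul_I p (N * t)).le
  rw [one_mul, conj_re, Real.norm_of_nonneg (mul_nonneg (by positivity) (by linarith)), hpow]
  calc 1 / (p : ℝ) * (1 - (((p : ℂ) ^ ((t : ℂ) * I)) ^ N).re)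
      ≤ 1 / (p : ℝ) * ((N ^ 2 + 2) * (1 - (f p * conj ((p : ℂ) ^ ((t : ℂ) * I))).re)) := by
        gcongr
    _ = _ := by ring

lemma pow_factorial_card_eq_one {M₀ : Type*} [MonoidWithZero M₀]
    [IsLeftCancelMulZero M₀] {S : Finset M₀} {v : M₀}
    (hv : v ≠ 0) (hS : ∀ k, v ^ k ∈ S) : v ^ S.card.factorial = 1 := by
  obtain ⟨i, hi, j, hj, hij, h⟩ := Finset.exists_ne_map_eq_of_card_lt_of_maps_to
    (s := Finset.range (S.card + 1)) (by simp) (fun k _ => hS k)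
  wlog hlt : i < j generalizing i j
  · exact this j hj i hi hij.symm h.symm (by omega)
  have hper : v ^ (j - i) = 1 :=
    mul_left_cancel₀ (pow_ne_zero i hv) (by rw [← pow_add, Nat.add_sub_cancel' hlt.le, mul_one, h])
  obtain ⟨m, hm⟩ := Nat.dvd_factorial (Nat.sub_pos_of_lt hlt)
    (by simp only [Finset.mem_range] at hj; omega : j - i ≤ S.card)
  rw [hm, pow_mul, hper, one_pow]

lemma Set.Finite.eventually_cofinite_infinite_preimage_singleton {α β : Type*} {g : α → β}
    (h : (range g).Finite) : ∀ᶠ a in cofinite, (g ⁻¹' {g a}).Infinite := by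
  refine eventually_cofinite.2 ((h.subset (sep_subset _ fun b => (g ⁻¹' {b}).Finite)).biUnion
    (fun b hb => hb.2) |>.subset fun a ha => ?_)
  exact mem_biUnion ⟨⟨a, rfl⟩, not_not.1 ha⟩ rfl

namespace IsMult

variable {f : ℕ → ℂ}

lemma map_prod_primes (hf : IsMult f) (T : Finset Nat.Primes) :
    f (∏ p ∈ T, (p : ℕ)) = ∏ p ∈ T, f p := by
  induction T using Finset.induction_on with
  | empty => simpa using hf.1
  | insert q T hq ih =>
    have hcop : Nat.Coprime q (∏ p ∈ T, (p : ℕ)) := Nat.Coprime.prod_right fun p hp =>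
      (Nat.coprime_primes q.prop p.prop).2 fun h => hq (Nat.Primes.coe_nat_injective h ▸ hp)
    rw [Finset.prod_insert hq, Finset.prod_insert hq, hf.2 _ _ hcop, ih]

lemma pow_mem_range (hf : IsMult f) {v : ℂ}
    (hv : ((fun p : Nat.Primes => f p) ⁻¹' {v}).Infinite) (k : ℕ) : v ^ k ∈ range f := by
  obtain ⟨T, hT, rfl⟩ := hv.exists_subset_card_eq k
  exact ⟨_, (hf.map_prod_primes T).trans (Finset.prod_eq_pow_card fun p hp => hT hp)⟩

lemma eventually_eq_zero_or_pow_eq_one (hf : IsMult f) (hfin : (range f).Finite) :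
    ∀ᶠ p : Nat.Primes in cofinite, f p = 0 ∨ f p ^ hfin.toFinset.card.factorial = 1 := by
  have hfin' : (range fun p : Nat.Primes => f p).Finite :=
    hfin.subset (range_comp_subset_range _ f)
  filter_upwards [hfin'.eventually_cofinite_infinite_preimage_singleton] with p hp
  exact (eq_or_ne (f p) 0).imp_right fun h0 =>
    pow_factorial_card_eq_one h0 fun k => hfin.mem_toFinset.2 (hf.pow_mem_range hp k)

end IsMult

theorem finite_range_pretends_archimedean_t_eq_zero_general
    (f : ℕ → ℂ) (hf : IsMult f)
    (hfin : (Set.range f).Finite) (t : ℝ)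
    (hpret : PretConv f (fun n : ℕ => (n : ℂ) ^ ((t : ℂ) * Complex.I))) :
    t = 0 := by
  have hN := Nat.factorial_ne_zero hfin.toFinset.card
  have hNt : (hfin.toFinset.card.factorial * t : ℝ) = 0 := eq_zero_of_pretConv_one_cpow_mul_I <|
    hpret.one_of_eventually_eq_zero_or_pow_eq_one hN (hf.eventually_eq_zero_or_pow_eq_one hfin)
  exact (mul_eq_zero.1 hNt).resolve_left (by exact_mod_cast hN)

theorem finite_range_pretends_archimedean_t_eq_zero
    (f : ℕ → ℂ) (hf : IsMult f) (hb : ∀ n : ℕ, ‖f n‖ ≤ 1)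
    (hfin : (Set.range f).Finite) (t : ℝ)
    (hpret : PretConv f (fun n : ℕ => (n : ℂ) ^ ((t : ℂ) * Complex.I))) :
    t = 0 :=
  finite_range_pretends_archimedean_t_eq_zero_general f hf hfin t hpret
end
end

section
/- Let f ∈ M, let χ be a Dirichlet character, and let F be a set of primes with ∑_{p ∈ F} 1/p < ∞. Assume f(n) = χ(n) for every n ≥ 1 that is coprime to every prime of F. Then f is Besicovitch rationally almost periodic (RAP); in particular the mean lim_{N→∞} (1/N)·∑_{n=1}^{N} f(n) exists. -/
/-!
Let `S` be a finite set of primes of `F` carrying all but `ε` of the mass of `∑_{p ∈ F} 1/p`, and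
`P = ∏_{p ∈ S} p ^ D` with `D` so large that `∑_{p ∈ S} p^{-D} < ε`. If no `p ∈ S` divides `n` to
the power `D`, then `a = gcd(n, P)` is the full `S`-part of `n` and `b = n / a` is coprime to `a`;
if moreover no prime of `F \ S` divides `n`, then `f n = f a * f b = f a * χ b`. The right-hand
side depends only on `n mod (m * P)`, and the exceptional `n` have upper density at most `2ε`,
which makes `f` a uniform limit of periodic functions in the Besicovitch seminorm. Periodic
functions have Cesàro means, and these pass to such limits.
-/

open scoped BigOperators Classical

noncomputable section

open Finset Filter Function Topology

def cesaroMean (f : ℕ → ℂ) (N : ℕ) : ℂ :=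
  1 / N * ∑ n ∈ Icc 1 N, f n

def avgDist (f g : ℕ → ℂ) (N : ℕ) : ℝ :=
  1 / N * ∑ n ∈ Icc 1 N, ‖f n - g n‖

namespace Function.Periodic

theorem sum_Icc_add {α : Type*} [AddCommMonoid α] {g : ℕ → α} {M : ℕ} (hg : Periodic g M)
    (N : ℕ) : ∑ n ∈ Icc 1 (N + M), g n = ∑ n ∈ Icc 1 N, g n + ∑ n ∈ Icc 1 M, g n := by
  induction N with
  | zero => simp
  | succ N ih =>
    rw [show N + 1 + M = N + M + 1 by omega, sum_Icc_succ_top (by omega), ih,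
      sum_Icc_succ_top (by omega), show N + M + 1 = N + 1 + M by omega, hg, add_right_comm]

theorem norm_le_sum_range {E : Type*} [SeminormedAddCommGroup E] {u : ℕ → E} {M : ℕ}
    (hu : Periodic u M) (hM : 0 < M) (n : ℕ) : ‖u n‖ ≤ ∑ k ∈ range M, ‖u k‖ := by
  rw [← hu.map_mod_nat]
  exact single_le_sum (fun k _ => norm_nonneg (u k)) (mem_range.2 (Nat.mod_lt n hM))

theorem tendsto_cesaroMean {g : ℕ → ℂ} {M : ℕ} (hg : Periodic g M) (hM : 0 < M) :
    Tendsto (cesaroMean g) atTop (𝓝 (cesaroMean g M)) := by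
  have hM0 : (M : ℂ) ≠ 0 := Nat.cast_ne_zero.2 hM.ne'
  set R : ℕ → ℂ := fun N => ∑ n ∈ Icc 1 N, g n - N * cesaroMean g M
  have hR : Periodic R M := fun N => by
    simp only [R, hg.sum_Icc_add, cesaroMean]
    push_cast
    field_simp
    ring
  have hmean : ∀ N ≠ 0, cesaroMean g N - cesaroMean g M = R N / N := fun N hN => by
    simp only [R, cesaroMean]
    field_simp
  rw [← tendsto_sub_nhds_zero_iff]
  refine squeeze_zero_norm' ?_ (tendsto_const_div_atTop_nhds_zero_nat (∑ k ∈ range M, ‖R k‖))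
  filter_upwards [eventually_ne_atTop 0] with N hN
  rw [hmean N hN, norm_div, Complex.norm_natCast]
  exact div_le_div_of_nonneg_right (hR.norm_le_sum_range hM N) (Nat.cast_nonneg N)

end Function.Periodic

section avgDist

variable {f g : ℕ → ℂ}

theorem avgDist_nonneg (f g : ℕ → ℂ) (N : ℕ) : 0 ≤ avgDist f g N := by
  unfold avgDist
  positivity

theorem avgDist_le_of_sum_le {N : ℕ} {c : ℝ} (hc : 0 ≤ c)
    (h : ∑ n ∈ Icc 1 N, ‖f n - g n‖ ≤ c * N) : avgDist f g N ≤ c := by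
  rw [avgDist, one_div_mul_eq_div]
  exact div_le_of_le_mul₀ (Nat.cast_nonneg N) hc h

theorem avgDist_le_add {A B : ℝ} (hf : ∀ n, ‖f n‖ ≤ A) (hg : ∀ n, ‖g n‖ ≤ B) (N : ℕ) :
    avgDist f g N ≤ A + B := by
  refine avgDist_le_of_sum_le (add_nonneg ((norm_nonneg _).trans (hf 0))
    ((norm_nonneg _).trans (hg 0))) ?_
  calc ∑ n ∈ Icc 1 N, ‖f n - g n‖ ≤ ∑ _n ∈ Icc 1 N, (A + B) :=
        sum_le_sum fun n _ => (norm_sub_le _ _).trans (add_le_add (hf n) (hg n))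
    _ = (A + B) * N := by simp [mul_comm, add_mul]

theorem norm_cesaroMean_sub_le (f g : ℕ → ℂ) (N : ℕ) :
    ‖cesaroMean f N - cesaroMean g N‖ ≤ avgDist f g N := by
  rw [cesaroMean, cesaroMean, ← mul_sub, ← sum_sub_distrib, norm_mul, avgDist]
  have hN : ‖(1 : ℂ) / N‖ = 1 / N := by simp
  rw [hN]
  gcongr
  exact norm_sum_le _ _

theorem sum_norm_sub_le_two_mul_card (hf : ∀ n, ‖f n‖ ≤ 1) (hg : ∀ n, ‖g n‖ ≤ 1)
    (s : Finset ℕ) (p : ℕ → Prop) [DecidablePred p] (hfg : ∀ n ∈ s, ¬ p n → f n = g n) :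
    ∑ n ∈ s, ‖f n - g n‖ ≤ 2 * #{n ∈ s | p n} := by
  rw [← sum_filter_add_sum_filter_not s p, add_comm,
    sum_eq_zero fun n hn => by rw [(mem_filter.1 hn).elim (hfg n), sub_self, norm_zero], zero_add]
  calc ∑ n ∈ s with p n, ‖f n - g n‖ ≤ ∑ _n ∈ {n ∈ s | p n}, (2 : ℝ) :=
        sum_le_sum fun n _ => (norm_sub_le _ _).trans (by linarith [hf n, hg n])
    _ = 2 * #{n ∈ s | p n} := by simp [mul_comm]

theorem isRAP_of_forall_avgDist_le
    (h : ∀ ε > 0, ∃ g M, 0 < M ∧ Periodic g M ∧ ∀ N, avgDist f g N ≤ ε) : IsRAP f := by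
  intro ε hε
  obtain ⟨g, M, hM, hg, hle⟩ := h (ε / 2) (by positivity)
  refine ⟨g, M, hM, hg, ?_⟩
  calc limsup (avgDist f g) atTop ≤ ε / 2 :=
        limsup_le_of_le (isCoboundedUnder_le_of_le atTop (avgDist_nonneg f g))
          (Eventually.of_forall hle)
    _ < ε := by linarith

theorem IsRAP.exists_tendsto_cesaroMean {C : ℝ} (hf : IsRAP f) (hb : ∀ n, ‖f n‖ ≤ C) :
    ∃ L, Tendsto (cesaroMean f) atTop (𝓝 L) := by
  refine cauchySeq_tendsto_of_complete (Metric.cauchySeq_iff.2 fun ε hε => ?_)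
  obtain ⟨g, M, hM, hg : Periodic g M, hlim⟩ := hf (ε / 3) (by positivity)
  have hclose : ∀ᶠ N in atTop, avgDist f g N < ε / 3 :=
    eventually_lt_of_limsup_lt hlim
      (isBoundedUnder_of ⟨_, avgDist_le_add hb (hg.norm_le_sum_range hM)⟩)
  obtain ⟨N₁, h₁⟩ := Metric.cauchySeq_iff.1 (hg.tendsto_cesaroMean hM).cauchySeq (ε / 3)
    (by positivity)
  obtain ⟨N₂, h₂⟩ := eventually_atTop.1 hclose
  have hfg : ∀ N ≥ N₂, dist (cesaroMean f N) (cesaroMean g N) < ε / 3 := fun N hN =>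
    (dist_eq_norm (cesaroMean f N) _ ▸ norm_cesaroMean_sub_le f g N).trans_lt (h₂ N hN)
  refine ⟨max N₁ N₂, fun a ha b hb => ?_⟩
  rw [ge_iff_le, max_le_iff] at ha hb
  calc dist (cesaroMean f a) (cesaroMean f b)
      ≤ dist (cesaroMean f a) (cesaroMean g a) + dist (cesaroMean g a) (cesaroMean g b)
        + dist (cesaroMean f b) (cesaroMean g b) := by
        rw [dist_comm (cesaroMean f b)]
        exact dist_triangle4 _ _ _ _
    _ < ε / 3 + ε / 3 + ε / 3 := by
        gcongr
        exacts [hfg a ha.2, h₁ a ha.1 b hb.1, hfg b hb.2]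
    _ = ε := by ring

end avgDist

section Arithmetic

variable {n P q D : ℕ} {S : Finset ℕ}

theorem not_dvd_div_gcd_of_ordProj_dvd (hn : n ≠ 0) (hq : q.Prime) (h : ordProj[q] n ∣ P) :
    ¬ q ∣ n / n.gcd P := by
  intro hdvd
  apply Nat.pow_succ_factorization_not_dvd hn hq
  calc q ^ (n.factorization q + 1) = ordProj[q] n * q := pow_succ _ _
    _ ∣ n.gcd P * (n / n.gcd P) := mul_dvd_mul (Nat.dvd_gcd (Nat.ordProj_dvd n q) h) hdvd
    _ = n := Nat.mul_div_cancel' (Nat.gcd_dvd_left n P)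

theorem coprime_gcd_div_gcd (hn : n ≠ 0) (h : ∀ q, q.Prime → q ∣ P → ordProj[q] n ∣ P) :
    Nat.Coprime (n.gcd P) (n / n.gcd P) :=
  Nat.coprime_of_dvd fun q hq hqa =>
    not_dvd_div_gcd_of_ordProj_dvd hn hq (h q hq (hqa.trans (Nat.gcd_dvd_right n P)))

theorem mem_of_prime_dvd_prod_pow (hS : ∀ p ∈ S, p.Prime) (hq : q.Prime)
    (h : q ∣ ∏ p ∈ S, p ^ D) : q ∈ S := by
  obtain ⟨p, hp, hqp⟩ := (Prime.dvd_finsetProd_iff hq.prime _).1 h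
  rwa [(Nat.prime_dvd_prime_iff_eq hq (hS p hp)).1 (hq.dvd_of_dvd_pow hqp)]

theorem ordProj_dvd_prod_pow (hq : q.Prime) (hn : n ≠ 0) (hSn : ∀ p ∈ S, ¬ p ^ D ∣ n)
    (hqS : q ∈ S) : ordProj[q] n ∣ ∏ p ∈ S, p ^ D := by
  refine (pow_dvd_pow q ?_).trans (dvd_prod_of_mem _ hqS)
  by_contra! hlt
  exact hSn q hqS ((hq.pow_dvd_iff_le_factorization hn).2 hlt.le)

theorem card_filter_exists_dvd_le {ι : Type*} (T : Finset ι) (d : ι → ℕ) (N : ℕ) :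
    (#{n ∈ Icc 1 N | ∃ i ∈ T, d i ∣ n} : ℝ) ≤ N * ∑ i ∈ T, 1 / (d i : ℝ) := by
  calc (#{n ∈ Icc 1 N | ∃ i ∈ T, d i ∣ n} : ℝ)
      ≤ #(T.biUnion fun i => {n ∈ Icc 1 N | d i ∣ n}) := by
        gcongr
        intro n hn
        simp only [mem_filter, mem_biUnion] at hn ⊢
        obtain ⟨hn, i, hi, hdvd⟩ := hn
        exact ⟨i, hi, hn, hdvd⟩
    _ ≤ ∑ i ∈ T, (#{n ∈ Icc 1 N | d i ∣ n} : ℝ) := by exact_mod_cast card_biUnion_le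
    _ = ∑ i ∈ T, ((N / d i : ℕ) : ℝ) := by
        simp only [← Nat.Ioc_filter_dvd_card_eq_div]
        rfl
    _ ≤ ∑ i ∈ T, (N : ℝ) / d i := sum_le_sum fun i _ => Nat.cast_div_le
    _ = N * ∑ i ∈ T, 1 / (d i : ℝ) := by simp only [mul_sum, mul_one_div]

theorem exists_finset_sum_le_of_summable {F : Set ℕ} {u : ℕ → ℝ}
    (hu : Summable fun p : F => u p) {δ : ℝ} (hδ : 0 < δ) :
    ∃ S : Finset ℕ, ↑S ⊆ F ∧ ∀ T : Finset ℕ, ↑T ⊆ F \ ↑S → ∑ p ∈ T, u p ≤ δ := by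
  obtain ⟨s, hs⟩ := summable_iff_vanishing_norm.1 hu δ hδ
  refine ⟨s.map (Embedding.subtype _), by simp, fun T hT => ?_⟩
  have hdisj : Disjoint (T.subtype (· ∈ F)) s := by
    refine disjoint_left.2 fun p hpT hps => (hT (mem_subtype.1 hpT)).2 ?_
    exact mem_map_of_mem _ hps
  have h := hs _ hdisj
  rw [sum_subtype_eq_sum_filter, filter_true_of_mem fun p hp => (hT hp).1] at h
  exact (le_abs_self _).trans h.le

theorem exists_sum_one_div_pow_le (S : Finset ℕ) (hS : ∀ p ∈ S, 1 < p) {δ : ℝ} (hδ : 0 < δ) :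
    ∃ D, ∑ p ∈ S, 1 / (p : ℝ) ^ D ≤ δ := by
  have h : Tendsto (fun D => ∑ p ∈ S, (1 / (p : ℝ)) ^ D) atTop (𝓝 0) := by
    refine (tendsto_finsetSum S fun p hp => ?_).trans (by rw [sum_const_zero])
    have hp : (1 : ℝ) < p := by exact_mod_cast hS p hp
    exact tendsto_pow_atTop_nhds_zero_of_lt_one (by positivity)
      ((div_lt_one (zero_lt_one.trans hp)).2 hp)
  obtain ⟨D, hD⟩ := (h.eventually (ge_mem_nhds hδ)).exists
  exact ⟨D, by simpa only [one_div_pow] using hD⟩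

end Arithmetic

def periodicModel (f χ : ℕ → ℂ) (S : Finset ℕ) (D n : ℕ) : ℂ :=
  if ∀ p ∈ S, ¬ p ^ D ∣ n then
    f (n.gcd (∏ p ∈ S, p ^ D)) * χ (n / n.gcd (∏ p ∈ S, p ^ D))
  else 0

section periodicModel

variable {f χ : ℕ → ℂ} {S : Finset ℕ} {D : ℕ}

theorem periodicModel_periodic {m : ℕ} (hχ : Periodic χ m) :
    Periodic (periodicModel f χ S D) (m * ∏ p ∈ S, p ^ D) := by
  intro n
  unfold periodicModel
  set P := ∏ p ∈ S, p ^ D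
  have hdvd : (∀ p ∈ S, ¬ p ^ D ∣ n + m * P) ↔ ∀ p ∈ S, ¬ p ^ D ∣ n := forall₂_congr fun p hp =>
    not_congr (Nat.dvd_add_left (dvd_mul_of_dvd_right (dvd_prod_of_mem _ hp) m))
  have hgcd : (n + m * P).gcd P = n.gcd P := Nat.gcd_add_mul_right_left P n m
  have hdiv : (n + m * P) / n.gcd P = n / n.gcd P + (P / n.gcd P) * m := by
    rw [Nat.add_div_of_dvd_right (Nat.gcd_dvd_left n P), Nat.mul_div_assoc m (Nat.gcd_dvd_right n P),
      mul_comm]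
  have hχ' : χ (n / n.gcd P + P / n.gcd P * m) = χ (n / n.gcd P) := hχ.nat_mul _ _
  simp only [hdvd, hgcd, hdiv, hχ']

theorem norm_periodicModel_le (hf : ∀ n, ‖f n‖ ≤ 1) (hχ : ∀ n, ‖χ n‖ ≤ 1) (n : ℕ) :
    ‖periodicModel f χ S D n‖ ≤ 1 := by
  unfold periodicModel
  split_ifs
  · rw [norm_mul]
    exact mul_le_one₀ (hf _) (norm_nonneg _) (hχ _)
  · simp

theorem periodicModel_eq {F : Set ℕ} (hf : IsMult f) (hS : ∀ p ∈ S, p.Prime)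
    (hfχ : ∀ n : ℕ, 1 ≤ n → (∀ p ∈ F, ¬ p ∣ n) → f n = χ n) {n : ℕ} (hn : n ≠ 0)
    (hSn : ∀ p ∈ S, ¬ p ^ D ∣ n) (hFn : ∀ p ∈ F, p ∉ S → ¬ p ∣ n) :
    periodicModel f χ S D n = f n := by
  set P := ∏ p ∈ S, p ^ D
  have hproj : ∀ q ∈ S, ordProj[q] n ∣ P := fun q hq =>
    ordProj_dvd_prod_pow (hS q hq) hn hSn hq
  have hcop : Nat.Coprime (n.gcd P) (n / n.gcd P) := coprime_gcd_div_gcd hn fun q hq hqP =>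
    hproj q (mem_of_prime_dvd_prod_pow hS hq hqP)
  have hF : ∀ p ∈ F, ¬ p ∣ n / n.gcd P := by
    intro p hpF hp
    by_cases hpS : p ∈ S
    · exact not_dvd_div_gcd_of_ordProj_dvd hn (hS p hpS) (hproj p hpS) hp
    · exact hFn p hpF hpS (hp.trans (Nat.div_dvd_of_dvd (Nat.gcd_dvd_left n P)))
  have hpos : 1 ≤ n / n.gcd P :=
    Nat.div_pos (Nat.gcd_le_left P (Nat.pos_of_ne_zero hn)) (Nat.gcd_pos_of_pos_left P
      (Nat.pos_of_ne_zero hn))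
  rw [periodicModel, if_pos hSn, ← hfχ _ hpos hF, ← hf.2 _ _ hcop,
    Nat.mul_div_cancel' (Nat.gcd_dvd_left n P)]

theorem exists_periodic_avgDist_le {m : ℕ} {F : Set ℕ} (hf : IsMult f) (hb : ∀ n, ‖f n‖ ≤ 1)
    (hm : 0 < m) (hχ : Periodic χ m) (hχb : ∀ n, ‖χ n‖ ≤ 1) (hF : ∀ p ∈ F, p.Prime)
    (hFsum : Summable fun p : F => (1 : ℝ) / (p : ℕ))
    (hfχ : ∀ n : ℕ, 1 ≤ n → (∀ p ∈ F, ¬ p ∣ n) → f n = χ n) {ε : ℝ} (hε : 0 < ε) :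
    ∃ g M, 0 < M ∧ Periodic g M ∧ ∀ N, avgDist f g N ≤ ε := by
  obtain ⟨S, hSF, hS⟩ := exists_finset_sum_le_of_summable (u := fun p => 1 / (p : ℝ)) hFsum (by positivity : 0 < ε / 4)
  have hSprime : ∀ p ∈ S, p.Prime := fun p hp => hF p (hSF hp)
  obtain ⟨D, hD⟩ := exists_sum_one_div_pow_le S (fun p hp => (hSprime p hp).one_lt)
    (by positivity : 0 < ε / 4)
  have hP : 0 < ∏ p ∈ S, p ^ D := prod_pos fun p hp => pow_pos (hSprime p hp).pos D
  refine ⟨periodicModel f χ S D, m * ∏ p ∈ S, p ^ D, Nat.mul_pos hm hP,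
    periodicModel_periodic hχ, fun N => avgDist_le_of_sum_le hε.le ?_⟩
  set T := {p ∈ Icc 1 N | p ∈ F ∧ p ∉ S}
  have hgood : ∀ n ∈ Icc 1 N, ¬ ((∃ p ∈ T, p ∣ n) ∨ ∃ p ∈ S, p ^ D ∣ n) →
      f n = periodicModel f χ S D n := by
    intro n hn hbad
    simp only [not_or, not_exists, not_and] at hbad
    have hn := mem_Icc.1 hn
    refine (periodicModel_eq hf hSprime hfχ (by omega) hbad.2 fun p hpF hpS hpn => ?_).symm
    refine hbad.1 p (mem_filter.2 ⟨mem_Icc.2 ⟨(hF p hpF).one_lt.le, ?_⟩, hpF, hpS⟩) hpn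
    exact (Nat.le_of_dvd (by omega) hpn).trans hn.2
  calc ∑ n ∈ Icc 1 N, ‖f n - periodicModel f χ S D n‖
      ≤ 2 * #{n ∈ Icc 1 N | (∃ p ∈ T, p ∣ n) ∨ ∃ p ∈ S, p ^ D ∣ n} :=
        sum_norm_sub_le_two_mul_card hb (norm_periodicModel_le hb hχb) _ _ hgood
    _ ≤ 2 * (N * (ε / 4) + N * (ε / 4)) := by
        rw [filter_or]
        gcongr
        refine (Nat.cast_le.2 (card_union_le _ _)).trans ?_
        push_cast
        gcongr
        · refine (card_filter_exists_dvd_le T id N).trans ?_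
          gcongr
          refine hS T fun p hp => ?_
          exact (mem_filter.1 hp).2
        · refine (card_filter_exists_dvd_le S (· ^ D) N).trans ?_
          push_cast
          gcongr
    _ = ε * N := by ring

end periodicModel

theorem rap_of_eq_char_off_small_primes
    (f : ℕ → ℂ) (hf : IsMult f) (hb : ∀ n : ℕ, ‖f n‖ ≤ 1)
    (m : ℕ) (hm : 1 ≤ m) (χ : ℕ → ℂ) (hχ : IsDirichletCharFn m χ)
    (F : Set ℕ) (hF : ∀ p ∈ F, Nat.Prime p)
    (hFsum : Summable (fun p : F => (1 : ℝ) / ((p : ℕ) : ℝ)))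
    (hfχ : ∀ n : ℕ, 1 ≤ n → (∀ p ∈ F, ¬ p ∣ n) → f n = χ n) :
    IsRAP f ∧
      ∃ L : ℂ, Filter.Tendsto
        (fun N : ℕ => (1 : ℂ) / N * ∑ n ∈ Finset.Icc 1 N, f n)
        Filter.atTop (nhds L) := by
  obtain ⟨χ₀, hχ₀⟩ := hχ
  have hχper : Periodic χ m := fun n => by simp [hχ₀]
  have hχb : ∀ n, ‖χ n‖ ≤ 1 := fun n => hχ₀ n ▸ χ₀.norm_le_one _
  have hrap : IsRAP f := isRAP_of_forall_avgDist_le fun ε hε =>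
    exists_periodic_avgDist_le hf hb hm hχper hχb hF hFsum hfχ hε
  exact ⟨hrap, hrap.exists_tendsto_cesaroMean hb⟩
end
end
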